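/- arXiv:2505.08020 — 3 statements merged into one kernel-verified Lean document; each statement's English description precedes it below -/
import Mathlib

section
/- Let G = P_n be a path (n ≥ 3) and L a list-assignment with |L(v)| ≥ deg(v)+1 for all v. If |⋃_{v∈V(G)} L(v)| ≥ 4 and α, β are proper L-colourings each having at least one unfrozen vertex, then α can be transformed into β by single-vertex recolourings through proper L-colourings. -/
/-- A proper list colouring. -/
def properL {V : Type*} (G : SimpleGraph V) (L : V → Finset ℕ) (c : V → ℕ) : Prop :=
  (∀ v, c v ∈ L v) ∧ ∀ ⦃u w⦄, G.Adj u w → c u ≠ c w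

/-- Vertex `v` is unfrozen under `c`. -/
def unfrozenAt {V : Type*} (G : SimpleGraph V) (L : V → Finset ℕ) (c : V → ℕ) (v : V) : Prop :=
  ∃ b ∈ L v, b ≠ c v ∧ ∀ u, G.Adj v u → c u ≠ b

/-- A single-vertex recolouring step between proper `L`-colourings. -/
def recolStep {V : Type*} (G : SimpleGraph V) (L : V → Finset ℕ) (c c' : V → ℕ) : Prop :=
  properL G L c ∧ properL G L c' ∧ ∃ x, c x ≠ c' x ∧ ∀ u, u ≠ x → c u = c' u

namespace S14

/-- proper colouring of the path instance of length `n` with lists `L`. -/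
def SProper (n : ℕ) (L : ℕ → Finset ℕ) (c : ℕ → ℕ) : Prop :=
  (∀ i < n, c i ∈ L i) ∧ ∀ i, i + 1 < n → c i ≠ c (i+1)

/-- position `i` is unfrozen. -/
def SFree (n : ℕ) (L : ℕ → Finset ℕ) (c : ℕ → ℕ) (i : ℕ) : Prop :=
  ∃ x ∈ L i, x ≠ c i ∧ (∀ j, j + 1 = i → c j ≠ x) ∧ (i + 1 < n → c (i+1) ≠ x)

def SStep (n : ℕ) (L : ℕ → Finset ℕ) (c c' : ℕ → ℕ) : Prop :=
  SProper n L c ∧ SProper n L c' ∧ ∃ x, x < n ∧ c x ≠ c' x ∧ ∀ u, u ≠ x → c u = c' u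

def SGood (n : ℕ) (L : ℕ → Finset ℕ) (c : ℕ → ℕ) : Prop :=
  SProper n L c ∧ ∃ i < n, SFree n L c i

abbrev Reach (n : ℕ) (L : ℕ → Finset ℕ) := Relation.ReflTransGen (SStep n L)

lemma sstep_symm {n L c c'} (h : SStep n L c c') : SStep n L c' c := by
  obtain ⟨h1, h2, x, hx, hne, hag⟩ := h
  exact ⟨h2, h1, x, hx, fun h => hne h.symm, fun u hu => (hag u hu).symm⟩

lemma reach_symm {n L c c'} (h : Reach n L c c') : Reach n L c' c := by
  induction h with
  | refl => exact .refl
  | tail _ h2 ih => exact Relation.ReflTransGen.trans (.single (sstep_symm h2)) ih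

lemma proper_update {n L c} (hc : SProper n L c) {x q : ℕ}
    (hq : q ∈ L x) (hprev : ∀ j, j + 1 = x → c j ≠ q) (hnext : x + 1 < n → c (x+1) ≠ q) :
    SProper n L (Function.update c x q) := by
  constructor
  · intro i hi
    rcases eq_or_ne i x with rfl | h
    · simpa using hq
    · rw [Function.update_of_ne h]; exact hc.1 i hi
  · intro i hi
    rcases eq_or_ne i x with rfl | h
    · rw [Function.update_self, Function.update_of_ne (by omega)]
      exact fun he => hnext hi he.symm
    · rw [Function.update_of_ne h]
      rcases eq_or_ne (i+1) x with he | h2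
      · rw [he, Function.update_self]
        exact fun hh => hprev i he hh
      · rw [Function.update_of_ne h2]; exact hc.2 i hi

lemma step_update {n L c} (hc : SProper n L c) {x q : ℕ} (hx : x < n)
    (hq : q ∈ L x) (hne : q ≠ c x)
    (hprev : ∀ j, j + 1 = x → c j ≠ q) (hnext : x + 1 < n → c (x+1) ≠ q) :
    SStep n L c (Function.update c x q) :=
  ⟨hc, proper_update hc hq hprev hnext, x, hx,
    by rw [Function.update_self]; exact fun h => hne h.symm,
    fun u hu => by rw [Function.update_of_ne hu]⟩

/-- any colouring that is the target of a step is good. -/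
lemma sstep_good {n L c c'} (h : SStep n L c c') : SGood n L c' := by
  obtain ⟨h1, h2, x, hx, hne, hag⟩ := h
  refine ⟨h2, x, hx, c x, h1.1 x hx, hne, ?_, ?_⟩
  · intro j hj
    rw [← hag j (by omega)]
    intro hh
    have := h1.2 j (by omega)
    rw [hj] at this; exact this hh
  · intro hxn
    rw [← hag _ (by omega : x + 1 ≠ x)]
    exact fun hh => h1.2 x hxn hh.symm

lemma reach_good {n L c c'} (h : Reach n L c c') (hg : SGood n L c) : SGood n L c' := by
  induction h with
  | refl => exact hg
  | tail _ h2 _ => exact sstep_good h2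

end S14
namespace S14

def Sizes (n : ℕ) (L : ℕ → Finset ℕ) : Prop :=
  2 ≤ (L 0).card ∧ 2 ≤ (L (n-1)).card ∧ ∀ i, 0 < i → i + 1 < n → 3 ≤ (L i).card

lemma frozen_cases {n L c i} (h : ¬ SFree n L c i) :
    ∀ x ∈ L i, x = c i ∨ (∃ j, j + 1 = i ∧ c j = x) ∨ (i + 1 < n ∧ c (i+1) = x) := by
  intro x hx
  by_contra hcon
  push_neg at hcon
  obtain ⟨h1, h2, h3⟩ := hcon
  exact h ⟨x, hx, h1, h2, h3⟩

lemma prop_step_right {n L c i} (hs : Sizes n L) (hc : SProper n L c)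
    (hf : SFree n L c i) (hi : i + 1 < n) :
    ∃ c', Reach n L c c' ∧ SProper n L c' ∧ SFree n L c' (i+1) := by
  by_cases hnext : SFree n L c (i+1)
  · exact ⟨c, .refl, hc, hnext⟩
  have hfr := frozen_cases hnext
  -- c i ∈ L (i+1)
  have hmem : c i ∈ L (i+1) := by
    by_contra hcm
    have hsub : L (i+1) ⊆ {c (i+1), c (i+2)} := by
      intro x hx
      rcases hfr x hx with h | ⟨j, hj, he⟩ | ⟨_, he⟩
      · simp [h]
      · exfalso; have : j = i := by omega
        subst this; exact hcm (he ▸ hx)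
      · simp [he.symm]
    have hcard := Finset.card_le_card hsub
    have h2 : ({c (i+1), c (i+2)} : Finset ℕ).card ≤ 2 := Finset.card_insert_le _ _ |>.trans (by simp)
    rcases Nat.lt_or_ge (i+2) n with hint | hlast
    · have := hs.2.2 (i+1) (by omega) (by omega)
      omega
    · -- i+1 = n-1 leaf: L (i+1) ⊆ {c (i+1)}
      have hsub2 : L (i+1) ⊆ {c (i+1)} := by
        intro x hx
        rcases hfr x hx with h | ⟨j, hj, he⟩ | ⟨hn, _⟩
        · simp [h]
        · exfalso; have : j = i := by omega
          subst this; exact hcm (he ▸ hx)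
        · omega
      have := Finset.card_le_card hsub2
      simp at this
      have hl : i + 1 = n - 1 := by omega
      have := hs.2.1
      rw [← hl] at this
      omega
  have hne2 : i + 2 < n → c (i+2) ≠ c i := by
    intro hn he
    have hsub : L (i+1) ⊆ {c (i+1), c i} := by
      intro x hx
      rcases hfr x hx with h | ⟨j, hj, hj2⟩ | ⟨_, h⟩
      · simp [h]
      · have : j = i := by omega
        subst this; simp [← hj2]
      · rw [he] at h; simp [← h]
    have hcard := Finset.card_le_card hsub
    have h2 : ({c (i+1), c i} : Finset ℕ).card ≤ 2 := Finset.card_insert_le _ _ |>.trans (by simp)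
    have := hs.2.2 (i+1) (by omega) (by omega)
    omega
  obtain ⟨x, hxL, hxne, hxprev, hxnext⟩ := hf
  refine ⟨Function.update c i x, .single (step_update hc (by omega) hxL hxne hxprev hxnext),
    proper_update hc hxL hxprev hxnext, c i, hmem, ?_, ?_, ?_⟩
  · rw [Function.update_of_ne (by omega)]
    exact hc.2 i hi
  · intro j hj
    have : j = i := by omega
    subst this
    rw [Function.update_self]
    exact hxne
  · intro hn
    rw [Function.update_of_ne (by omega)]
    exact hne2 hn

lemma prop_step_left {n L c i} (hs : Sizes n L) (hc : SProper n L c)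
    (hf : SFree n L c (i+1)) (hi : i + 1 < n) :
    ∃ c', Reach n L c c' ∧ SProper n L c' ∧ SFree n L c' i := by
  by_cases hprev : SFree n L c i
  · exact ⟨c, .refl, hc, hprev⟩
  have hfr := frozen_cases hprev
  have hmem : c (i+1) ∈ L i := by
    by_contra hcm
    rcases Nat.eq_zero_or_pos i with rfl | hpos
    · have hsub : L 0 ⊆ {c 0} := by
        intro x hx
        rcases hfr x hx with h | ⟨j, hj, _⟩ | ⟨_, he⟩
        · simp [h]
        · omega
        · exact absurd (he ▸ hx) hcm
      have := Finset.card_le_card hsub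
      have := hs.1
      simp at *; omega
    · obtain ⟨k, rfl⟩ : ∃ k, i = k + 1 := ⟨i - 1, by omega⟩
      have hsub : L (k+1) ⊆ {c (k+1), c k} := by
        intro x hx
        rcases hfr x hx with h | ⟨j, hj, he⟩ | ⟨_, he⟩
        · simp [h]
        · have : j = k := by omega
          subst this; simp [← he]
        · exact absurd (he ▸ hx) hcm
      have hcard := Finset.card_le_card hsub
      have h2 : ({c (k+1), c k} : Finset ℕ).card ≤ 2 := Finset.card_insert_le _ _ |>.trans (by simp)
      have := hs.2.2 (k+1) (by omega) (by omega)
      omega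
  have hne2 : ∀ j, j + 1 = i → c j ≠ c (i+1) := by
    intro j hj he
    subst hj
    have hsub : L (j+1) ⊆ {c (j+1), c j} := by
      intro x hx
      rcases hfr x hx with h | ⟨j', hj', he'⟩ | ⟨_, he'⟩
      · simp [h]
      · have : j' = j := by omega
        subst this; simp [← he']
      · have : x = c j := he'.symm.trans he.symm
        simp [this]
    have hcard := Finset.card_le_card hsub
    have h2 : ({c (j+1), c j} : Finset ℕ).card ≤ 2 := Finset.card_insert_le _ _ |>.trans (by simp)
    have := hs.2.2 (j+1) (by omega) (by omega)
    omega
  obtain ⟨x, hxL, hxne, hxprev, hxnext⟩ := hf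
  refine ⟨Function.update c (i+1) x,
    .single (step_update hc hi hxL hxne hxprev hxnext),
    proper_update hc hxL hxprev hxnext, c (i+1), hmem, ?_, ?_, ?_⟩
  · rw [Function.update_of_ne (by omega)]
    exact Ne.symm (hc.2 i hi)
  · intro j hj
    rw [Function.update_of_ne (by omega)]
    exact hne2 j hj
  · intro hn
    rw [Function.update_self]
    exact hxne

lemma reach_free_right {n L} (hs : Sizes n L) :
    ∀ d {c i}, SProper n L c → SFree n L c i → i + d < n →
    ∃ c', Reach n L c c' ∧ SProper n L c' ∧ SFree n L c' (i+d) := by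
  intro d
  induction d with
  | zero => exact fun hc hf _ => ⟨_, .refl, hc, hf⟩
  | succ d ih =>
    intro c i hc hf hlt
    obtain ⟨c1, hr1, hp1, hf1⟩ := prop_step_right hs hc hf (by omega)
    obtain ⟨c2, hr2, hp2, hf2⟩ := ih hp1 hf1 (by omega : (i+1) + d < n)
    exact ⟨c2, hr1.trans hr2, hp2, by
      have : i + 1 + d = i + (d+1) := by omega
      rwa [this] at hf2⟩

/-- from a good colouring reach one where position n-2 is unfrozen -/
lemma reach_free_pen {m L c} (hs : Sizes (m+2) L) (hg : SGood (m+2) L c) :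
    ∃ c', Reach (m+2) L c c' ∧ SProper (m+2) L c' ∧ SFree (m+2) L c' m := by
  obtain ⟨hc, i, hi, hf⟩ := hg
  rcases Nat.lt_or_ge i (m+1) with hlt | hge
  · obtain ⟨c', h1, h2, h3⟩ := reach_free_right hs (m - i) hc hf (by omega)
    refine ⟨c', h1, h2, by
      have : i + (m - i) = m := by omega
      rwa [this] at h3⟩
  · have : i = m + 1 := by omega
    subst this
    exact prop_step_left hs hc hf (by omega)

/-- reach a colouring with last position coloured b -/
lemma reach_last {m L c b} (hs : Sizes (m+2) L) (hg : SGood (m+2) L c)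
    (hb : b ∈ L (m+1)) :
    ∃ c', Reach (m+2) L c c' ∧ SProper (m+2) L c' ∧ c' (m+1) = b := by
  obtain ⟨c1, hr1, hp1, hf1⟩ := reach_free_pen hs hg
  by_cases hend : c1 (m+1) = b
  · exact ⟨c1, hr1, hp1, hend⟩
  by_cases hpen : b = c1 m
  · -- first recolour m, then m+1
    obtain ⟨x, hxL, hxne, hxprev, hxnext⟩ := hf1
    have hst := step_update hp1 (by omega : m < m + 2) hxL hxne hxprev hxnext
    set c2 := Function.update c1 m x with hc2
    have hp2 : SProper (m+2) L c2 := proper_update hp1 hxL hxprev hxnext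
    have hst2 := step_update hp2 (by omega : m + 1 < m + 2) hb
      (by rw [hc2, Function.update_of_ne (by omega)]; exact fun h => hend h.symm)
      (by intro j hj
          have : j = m := by omega
          subst this
          rw [hc2, Function.update_self]
          exact fun h => hxne (h.trans hpen))
      (fun h => absurd h (by omega))
    exact ⟨_, hr1.trans ((Relation.ReflTransGen.single hst).trans (.single hst2)),
      (sstep_good hst2).1, Function.update_self _ _ _⟩
  · have hst := step_update hp1 (by omega : m + 1 < m + 2) hb (fun h => hend h.symm)
      (by intro j hj
          have : j = m := by omega
          subst this; exact fun h => hpen h.symm)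
      (fun h => absurd h (by omega))
    exact ⟨_, hr1.trans (.single hst), (sstep_good hst).1, Function.update_self _ _ _⟩

end S14
namespace S14

/-- lists of the peeled instance: positions `0..m`, with `b` removed from `L m`. -/
def restrL (m : ℕ) (L : ℕ → Finset ℕ) (b : ℕ) : ℕ → Finset ℕ :=
  fun i => if i = m then (L m).erase b else L i

lemma restrL_self {m L b} : restrL m L b m = (L m).erase b := by simp [restrL]

lemma restrL_ne {m L b i} (h : i ≠ m) : restrL m L b i = L i := by simp [restrL, h]

lemma restr_proper {m L b c} (hc : SProper (m+2) L c) (hcb : c (m+1) = b) :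
    SProper (m+1) (restrL m L b) c := by
  constructor
  · intro i hi
    by_cases h : i = m
    · rw [h, restrL_self, Finset.mem_erase]
      refine ⟨?_, hc.1 m (by omega)⟩
      rw [← hcb]
      exact hc.2 m (by omega)
    · rw [restrL_ne h]
      exact hc.1 i (by omega)
  · intro i hi
    exact hc.2 i (by omega)

lemma unrestr_proper {m L b c} (hc : SProper (m+1) (restrL m L b) c)
    (hcb : c (m+1) = b) (hb : b ∈ L (m+1)) : SProper (m+2) L c := by
  have hmem : ∀ i, i < m + 1 → c i ∈ L i := by
    intro i hi
    have h2 := hc.1 i hi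
    by_cases h : i = m
    · rw [h] at h2 ⊢
      rw [restrL_self, Finset.mem_erase] at h2
      exact h2.2
    · rwa [restrL_ne h] at h2
  constructor
  · intro i hi
    rcases Nat.lt_or_ge i (m+1) with h | h
    · exact hmem i h
    · have hi2 : i = m + 1 := by omega
      rw [hi2, hcb]; exact hb
  · intro i hi
    rcases Nat.lt_or_ge (i+1) (m+1) with h | h
    · exact hc.2 i h
    · have hi2 : i = m := by omega
      have h2 := hc.1 m (by omega)
      rw [restrL_self, Finset.mem_erase] at h2
      rw [hi2, hcb]
      exact h2.1

lemma lift_step {m L b c c'} (h : SStep (m+1) (restrL m L b) c c')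
    (hcb : c (m+1) = b) (hb : b ∈ L (m+1)) :
    SStep (m+2) L c c' ∧ c' (m+1) = b := by
  obtain ⟨h1, h2, x, hx, hne, hag⟩ := h
  have hcb' : c' (m+1) = b := by rw [← hag (m+1) (by omega)]; exact hcb
  exact ⟨⟨unrestr_proper h1 hcb hb, unrestr_proper h2 hcb' hb, x, by omega, hne, hag⟩, hcb'⟩

/-- values at m+1 never change along a restricted reach -/
lemma restr_reach_last {m L b c d} (h : Reach (m+1) (restrL m L b) c d) :
    d (m+1) = c (m+1) := by
  induction h with
  | refl => rfl
  | tail _ hstep ih =>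
    obtain ⟨_, _, x, hx, _, hag⟩ := hstep
    rw [← hag (m+1) (by omega)]
    exact ih

lemma lift_reach {m L b c d} (h : Reach (m+1) (restrL m L b) c d)
    (hcb : c (m+1) = b) (hb : b ∈ L (m+1)) : Reach (m+2) L c d := by
  induction h with
  | refl => exact .refl
  | tail hr hstep ih =>
    exact ih.tail (lift_step hstep ((restr_reach_last hr).trans hcb) hb).1

lemma restr_free_lo {m L b c i} (hi : i < m)
    (h : SFree (m+2) L c i) : SFree (m+1) (restrL m L b) c i := by
  obtain ⟨x, hxL, h1, h2, h3⟩ := h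
  exact ⟨x, by rw [restrL_ne (by omega : i ≠ m)]; exact hxL,
    h1, h2, fun hn => h3 (by omega)⟩

lemma restr_free_hi {m L b c} (hcb : c (m+1) = b)
    (h : SFree (m+2) L c m) : SFree (m+1) (restrL m L b) c m := by
  obtain ⟨x, hxL, h1, h2, h3⟩ := h
  refine ⟨x, ?_, h1, h2, fun hn => absurd hn (by omega)⟩
  rw [restrL_self, Finset.mem_erase]
  exact ⟨fun he => (h3 (by omega)) (hcb.trans he.symm), hxL⟩

lemma restr_good {m L b c} (hc : SProper (m+2) L c) (hcb : c (m+1) = b)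
    (h : ∃ i < m + 1, SFree (m+2) L c i) : SGood (m+1) (restrL m L b) c := by
  obtain ⟨i, hi, hf⟩ := h
  refine ⟨restr_proper hc hcb, i, hi, ?_⟩
  rcases Nat.lt_or_ge i m with h | h
  · exact restr_free_lo h hf
  · have hi2 : i = m := by omega
    subst hi2
    exact restr_free_hi hcb hf

lemma restr_sizes {m L b} (hm : 1 ≤ m) (hs : Sizes (m+2) L) :
    Sizes (m+1) (restrL m L b) := by
  obtain ⟨h0, h1, h2⟩ := hs
  refine ⟨?_, ?_, ?_⟩
  · rw [restrL_ne (by omega : (0:ℕ) ≠ m)]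
    exact h0
  · have he : m + 1 - 1 = m := by omega
    rw [he, restrL_self]
    have ha := h2 m (by omega) (by omega)
    have hb := Finset.pred_card_le_card_erase (s := L m) (a := b)
    omega
  · intro i hi hi2
    rw [restrL_ne (by omega : i ≠ m)]
    exact h2 i hi (by omega)

def uR (m : ℕ) (L : ℕ → Finset ℕ) (b : ℕ) : Finset ℕ :=
  ((Finset.range m).biUnion L) ∪ (L m).erase b

lemma restr_union {m L b} :
    (Finset.range (m+1)).biUnion (restrL m L b) = uR m L b := by
  ext x
  simp only [uR, Finset.mem_biUnion, Finset.mem_union, Finset.mem_range]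
  constructor
  · rintro ⟨i, hi, hx⟩
    by_cases h : i = m
    · rw [h, restrL_self] at hx; exact Or.inr hx
    · rw [restrL_ne h] at hx; exact Or.inl ⟨i, by omega, hx⟩
  · rintro (⟨i, hi, hx⟩ | hx)
    · exact ⟨i, by omega, by rw [restrL_ne (by omega : i ≠ m)]; exact hx⟩
    · exact ⟨m, by omega, by rw [restrL_self]; exact hx⟩

end S14
namespace S14

def revc (n : ℕ) (c : ℕ → ℕ) : ℕ → ℕ := fun i => if i < n then c (n - 1 - i) else c i

def revL (n : ℕ) (L : ℕ → Finset ℕ) : ℕ → Finset ℕ := fun i => L (n - 1 - i)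

lemma revc_lt {n c i} (h : i < n) : revc n c i = c (n - 1 - i) := if_pos h

lemma revc_invol {n c} : revc n (revc n c) = c := by
  funext i
  by_cases h : i < n
  · rw [revc_lt h, revc_lt (by omega)]
    congr 1
    omega
  · simp [revc, h]

lemma rev_proper {n L c} (hc : SProper n L c) : SProper n (revL n L) (revc n c) := by
  constructor
  · intro i hi
    rw [revc_lt hi]
    exact hc.1 _ (by omega)
  · intro i hi
    rw [revc_lt (by omega), revc_lt hi]
    have e1 : n - 1 - (i + 1) = n - 2 - i := by omega
    have e2 : n - 2 - i + 1 = n - 1 - i := by omega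
    rw [e1]
    have := hc.2 (n - 2 - i) (by omega)
    rw [e2] at this
    exact this.symm

lemma rev_free {n L c i} (hi : i < n) (h : SFree n L c i) :
    SFree n (revL n L) (revc n c) (n - 1 - i) := by
  obtain ⟨x, hxL, h1, h2, h3⟩ := h
  refine ⟨x, ?_, ?_, ?_, ?_⟩
  · show x ∈ L (n - 1 - (n - 1 - i))
    have : n - 1 - (n - 1 - i) = i := by omega
    rwa [this]
  · rw [revc_lt (by omega)]
    have : n - 1 - (n - 1 - i) = i := by omega
    rwa [this]
  · intro j hj
    rw [revc_lt (by omega)]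
    have : n - 1 - j = i + 1 := by omega
    rw [this]
    exact h3 (by omega)
  · intro hn
    rw [revc_lt (by omega)]
    have : n - 1 - (n - 1 - i + 1) = i - 1 := by omega
    rw [this]
    exact h2 (i-1) (by omega)

lemma rev_step {n L c c'} (h : SStep n L c c') : SStep n (revL n L) (revc n c) (revc n c') := by
  obtain ⟨h1, h2, x, hx, hne, hag⟩ := h
  refine ⟨rev_proper h1, rev_proper h2, n - 1 - x, by omega, ?_, ?_⟩
  · rw [revc_lt (by omega), revc_lt (by omega)]
    have : n - 1 - (n - 1 - x) = x := by omega
    rwa [this]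
  · intro u hu
    by_cases h : u < n
    · rw [revc_lt h, revc_lt h]
      exact hag _ (by omega)
    · simp only [revc, if_neg h]
      exact hag u (by omega)

lemma rev_reach {n L c d} (h : Reach n L c d) : Reach n (revL n L) (revc n c) (revc n d) := by
  induction h with
  | refl => exact .refl
  | tail _ hstep ih => exact ih.tail (rev_step hstep)

lemma rev_good {n L c} (h : SGood n L c) : SGood n (revL n L) (revc n c) := by
  obtain ⟨hc, i, hi, hf⟩ := h
  exact ⟨rev_proper hc, n - 1 - i, by omega, rev_free hi hf⟩

lemma rev_sizes {n L} (hn : 2 ≤ n) (hs : Sizes n L) : Sizes n (revL n L) := by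
  obtain ⟨h0, h1, h2⟩ := hs
  refine ⟨?_, ?_, ?_⟩
  · show 2 ≤ (L (n - 1 - 0)).card
    simpa using h1
  · show 2 ≤ (L (n - 1 - (n-1))).card
    have : n - 1 - (n-1) = 0 := by omega
    rw [this]; exact h0
  · intro i hi hi2
    exact h2 (n - 1 - i) (by omega) (by omega)

lemma rev_union {n L} : (Finset.range n).biUnion (revL n L) = (Finset.range n).biUnion L := by
  ext x
  simp only [Finset.mem_biUnion, Finset.mem_range]
  constructor
  · rintro ⟨i, hi, hx⟩
    exact ⟨n - 1 - i, by omega, hx⟩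
  · rintro ⟨i, hi, hx⟩
    refine ⟨n - 1 - i, by omega, ?_⟩
    show x ∈ L (n - 1 - (n - 1 - i))
    have : n - 1 - (n - 1 - i) = i := by omega
    rwa [this]

lemma sproper_congr {n L L' c} (hL : ∀ i < n, L i = L' i) (h : SProper n L c) :
    SProper n L' c :=
  ⟨fun i hi => hL i hi ▸ h.1 i hi, h.2⟩

lemma sstep_congr {n L L' c c'} (hL : ∀ i < n, L i = L' i) (h : SStep n L c c') :
    SStep n L' c c' := by
  obtain ⟨h1, h2, x, hx, hne, hag⟩ := h
  exact ⟨sproper_congr hL h1, sproper_congr hL h2, x, hx, hne, hag⟩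

lemma reach_congr {n L L' c d} (hL : ∀ i < n, L i = L' i) (h : Reach n L c d) :
    Reach n L' c d := by
  induction h with
  | refl => exact .refl
  | tail _ hstep ih => exact ih.tail (sstep_congr hL hstep)

lemma revL_invol {n L} : ∀ i < n, revL n (revL n L) i = L i := by
  intro i hi
  show L (n - 1 - (n - 1 - i)) = L i
  congr 1
  omega

end S14
namespace S14

lemma reach_junk {n L c d} (h : Reach n L c d) : ∀ u, n ≤ u → d u = c u := by
  induction h with
  | refl => exact fun _ _ => rfl
  | tail _ hstep ih =>
    intro u hu
    obtain ⟨_, _, x, hx, _, hag⟩ := hstep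
    rw [← hag u (by omega)]
    exact ih u hu

lemma base2 {L : ℕ → Finset ℕ} {α β : ℕ → ℕ}
    (hU : 3 ≤ ((Finset.range 2).biUnion L).card)
    (hα : SProper 2 L α) (hβ : SProper 2 L β)
    (hjunk : ∀ i, 2 ≤ i → α i = β i) : Reach 2 L α β := by
  have hd : ∀ (c : ℕ → ℕ), SProper 2 L c → ∀ v ∈ L 0, v ≠ c 1 →
      Reach 2 L c (Function.update c 0 v) := by
    intro c hc v hv hv1
    by_cases he : v = c 0
    · rw [he, Function.update_eq_self]
    · exact .single (step_update hc (by omega) hv he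
        (fun j hj => absurd hj (by omega)) (fun _ => Ne.symm hv1))
  have hd1 : ∀ (c : ℕ → ℕ), SProper 2 L c → ∀ v ∈ L 1, v ≠ c 0 →
      Reach 2 L c (Function.update c 1 v) := by
    intro c hc v hv hv0
    by_cases he : v = c 1
    · rw [he, Function.update_eq_self]
    · exact .single (step_update hc (by omega) hv he
        (fun j hj => by
          obtain rfl : j = 0 := by omega
          exact Ne.symm hv0)
        (fun h => absurd h (by omega)))
  have hprop_u0 : ∀ (c : ℕ → ℕ), SProper 2 L c → ∀ v ∈ L 0, v ≠ c 1 →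
      SProper 2 L (Function.update c 0 v) := by
    intro c hc v hv hv1
    exact proper_update hc hv (fun j hj => absurd hj (by omega)) (fun _ => Ne.symm hv1)
  have hprop_u1 : ∀ (c : ℕ → ℕ), SProper 2 L c → ∀ v ∈ L 1, v ≠ c 0 →
      SProper 2 L (Function.update c 1 v) := by
    intro c hc v hv hv0
    exact proper_update hc hv
      (fun j hj => by
          obtain rfl : j = 0 := by omega
          exact Ne.symm hv0)
      (fun h => absurd h (by omega))
  have hb0 : β 0 ∈ L 0 := hβ.1 0 (by omega)
  have hb1 : β 1 ∈ L 1 := hβ.1 1 (by omega)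
  have hbne : β 0 ≠ β 1 := hβ.2 0 (by omega)
  have hane : α 0 ≠ α 1 := hα.2 0 (by omega)
  by_cases hA : β 0 = α 1
  · by_cases hB : β 1 = α 0
    · -- swap case
      obtain ⟨z, hz, hzx, hzy⟩ :
          ∃ z ∈ (Finset.range 2).biUnion L, z ≠ α 0 ∧ z ≠ α 1 := by
        by_contra hcon
        push_neg at hcon
        have hsub : (Finset.range 2).biUnion L ⊆ {α 0, α 1} := by
          intro t ht
          by_cases h : t = α 0
          · simp [h]
          · simp [hcon t ht h]
        have := Finset.card_le_card hsub
        have h2 : ({α 0, α 1} : Finset ℕ).card ≤ 2 :=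
          Finset.card_insert_le _ _ |>.trans (by simp)
        omega
      rw [Finset.mem_biUnion] at hz
      obtain ⟨i, hi, hzi⟩ := hz
      simp only [Finset.mem_range] at hi
      interval_cases i
      · -- z ∈ L 0 : (x,y) → (z,y) → (z,x) → (y,x)
        have r1 := hd α hα z hzi hzy
        set c1 := Function.update α 0 z with hc1
        have hp1 := hprop_u0 α hα z hzi hzy
        have hc10 : c1 0 = z := Function.update_self _ _ _
        have hc11 : c1 1 = α 1 := Function.update_of_ne (by omega) _ _
        have r2 := hd1 c1 hp1 (α 0) (hB ▸ hb1) (by rw [hc10]; exact Ne.symm hzx)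
        set c2 := Function.update c1 1 (α 0) with hc2
        have hp2 := hprop_u1 c1 hp1 (α 0) (hB ▸ hb1) (by rw [hc10]; exact Ne.symm hzx)
        have hc20 : c2 0 = z := by rw [hc2, Function.update_of_ne (by omega)]; exact hc10
        have hc21 : c2 1 = α 0 := Function.update_self _ _ _
        have r3 := hd c2 hp2 (α 1) (hA ▸ hb0) (by rw [hc21]; exact Ne.symm hane)
        have hfin : Function.update c2 0 (α 1) = β := by
          funext u
          rcases Nat.lt_or_ge u 2 with hu | hu
          · interval_cases u
            · rw [Function.update_self, hA]
            · rw [Function.update_of_ne (by omega), hc21, hB]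
          · rw [Function.update_of_ne (by omega), hc2, Function.update_of_ne (by omega),
              hc1, Function.update_of_ne (by omega)]
            exact hjunk u hu
        exact (r1.trans (r2.trans (hfin ▸ r3)))
      · -- z ∈ L 1 : (x,y) → (x,z) → (y,z) → (y,x)
        have r1 := hd1 α hα z hzi hzx
        set c1 := Function.update α 1 z with hc1
        have hp1 := hprop_u1 α hα z hzi hzx
        have hc10 : c1 0 = α 0 := Function.update_of_ne (by omega) _ _
        have hc11 : c1 1 = z := Function.update_self _ _ _
        have r2 := hd c1 hp1 (α 1) (hA ▸ hb0) (by rw [hc11]; exact Ne.symm hzy)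
        set c2 := Function.update c1 0 (α 1) with hc2
        have hp2 := hprop_u0 c1 hp1 (α 1) (hA ▸ hb0) (by rw [hc11]; exact Ne.symm hzy)
        have hc20 : c2 0 = α 1 := Function.update_self _ _ _
        have hc21 : c2 1 = z := by rw [hc2, Function.update_of_ne (by omega)]; exact hc11
        have r3 := hd1 c2 hp2 (α 0) (hB ▸ hb1) (by rw [hc20]; exact hane)
        have hfin : Function.update c2 1 (α 0) = β := by
          funext u
          rcases Nat.lt_or_ge u 2 with hu | hu
          · interval_cases u
            · rw [Function.update_of_ne (by omega), hc20, hA]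
            · rw [Function.update_self, hB]
          · rw [Function.update_of_ne (by omega), hc2, Function.update_of_ne (by omega),
              hc1, Function.update_of_ne (by omega)]
            exact hjunk u hu
        exact (r1.trans (r2.trans (hfin ▸ r3)))
    · -- α 1 = β 0, α 0 ≠ β 1 : recolour pos 1 to β 1 first, then pos 0
      have r1 := hd1 α hα (β 1) hb1 hB
      set c1 := Function.update α 1 (β 1) with hc1
      have hp1 := hprop_u1 α hα (β 1) hb1 hB
      have hc10 : c1 0 = α 0 := Function.update_of_ne (by omega) _ _
      have hc11 : c1 1 = β 1 := Function.update_self _ _ _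
      have r2 := hd c1 hp1 (β 0) hb0 (by rw [hc11]; exact hbne)
      have hfin : Function.update c1 0 (β 0) = β := by
        funext u
        rcases Nat.lt_or_ge u 2 with hu | hu
        · interval_cases u
          · rw [Function.update_self]
          · rw [Function.update_of_ne (by omega), hc11]
        · rw [Function.update_of_ne (by omega), hc1, Function.update_of_ne (by omega)]
          exact hjunk u hu
      exact r1.trans (hfin ▸ r2)
  · -- β 0 ≠ α 1 : recolour pos 0 to β 0 first, then pos 1
    have r1 := hd α hα (β 0) hb0 hA
    set c1 := Function.update α 0 (β 0) with hc1
    have hp1 := hprop_u0 α hα (β 0) hb0 hA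
    have hc10 : c1 0 = β 0 := Function.update_self _ _ _
    have hc11 : c1 1 = α 1 := Function.update_of_ne (by omega) _ _
    have r2 := hd1 c1 hp1 (β 1) hb1 (by rw [hc10]; exact Ne.symm hbne)
    have hfin : Function.update c1 1 (β 1) = β := by
      funext u
      rcases Nat.lt_or_ge u 2 with hu | hu
      · interval_cases u
        · rw [Function.update_of_ne (by omega), hc10]
        · rw [Function.update_self]
      · rw [Function.update_of_ne (by omega), hc1, Function.update_of_ne (by omega)]
        exact hjunk u hu
    exact r1.trans (hfin ▸ r2)

end S14
namespace S14

/-- a good proper colouring with last value b, frozen everywhere except the last vertex -/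
def RigidP (m : ℕ) (L : ℕ → Finset ℕ) (b : ℕ) : Prop :=
  ∃ c, SProper (m+2) L c ∧ c (m+1) = b ∧ (∀ i < m + 1, ¬ SFree (m+2) L c i) ∧
    SGood (m+2) L c


lemma window0 {m L c} (hs : Sizes (m+2) L) (hp : SProper (m+2) L c)
    (hf : ¬ SFree (m+2) L c 0) : L 0 = {c 0, c 1} := by
  have hfr := frozen_cases hf
  have hsub : L 0 ⊆ {c 0, c 1} := by
    intro x hx
    rcases hfr x hx with h | ⟨j, hj, _⟩ | ⟨_, h⟩
    · simp [h]
    · omega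
    · simp [← h]
  have hne : c 0 ≠ c 1 := hp.2 0 (by omega)
  have hcard : ({c 0, c 1} : Finset ℕ).card ≤ 2 :=
    (Finset.card_insert_le _ _).trans (by simp)
  have h0 := hs.1
  exact Finset.eq_of_subset_of_card_le hsub (by omega)

lemma windowi {m L c} (hs : Sizes (m+2) L) (hp : SProper (m+2) L c) {j} (hj : j < m)
    (hf : ¬ SFree (m+2) L c (j+1)) :
    L (j+1) = {c j, c (j+1), c (j+2)} ∧ c j ≠ c (j+2) := by
  have hfr := frozen_cases hf
  have hsub : L (j+1) ⊆ {c j, c (j+1), c (j+2)} := by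
    intro x hx
    rcases hfr x hx with h | ⟨j', hj', h⟩ | ⟨_, h⟩
    · simp [h]
    · have : j' = j := by omega
      subst this; simp [← h]
    · simp [← h]
  have h3 : 3 ≤ (L (j+1)).card := hs.2.2 (j+1) (by omega) (by omega)
  have hne02 : c j ≠ c (j+2) := by
    intro he
    have hsub2 : L (j+1) ⊆ {c j, c (j+1)} := by
      intro x hx
      have := hsub hx
      simp only [Finset.mem_insert, Finset.mem_singleton] at this ⊢
      rcases this with h | h | h
      · exact Or.inl h
      · exact Or.inr h
      · exact Or.inl (h.trans he.symm)
    have := Finset.card_le_card hsub2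
    have : ({c j, c (j+1)} : Finset ℕ).card ≤ 2 :=
      (Finset.card_insert_le _ _).trans (by simp)
    have := Finset.card_le_card hsub2
    omega
  have hcard : ({c j, c (j+1), c (j+2)} : Finset ℕ).card ≤ 3 :=
    (Finset.card_insert_le _ _).trans (by
      have := Finset.card_insert_le (c (j+1)) ({c (j+2)} : Finset ℕ)
      simp at this ⊢
      omega)
  exact ⟨Finset.eq_of_subset_of_card_le hsub (by omega), hne02⟩

lemma windowlast {m L c} (hs : Sizes (m+2) L) (hp : SProper (m+2) L c)
    (hf : ¬ SFree (m+2) L c (m+1)) : L (m+1) = {c m, c (m+1)} := by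
  have hfr := frozen_cases hf
  have hsub : L (m+1) ⊆ {c m, c (m+1)} := by
    intro x hx
    rcases hfr x hx with h | ⟨j, hj, h⟩ | ⟨h2, _⟩
    · simp [h]
    · have : j = m := by omega
      subst this; simp [← h]
    · omega
  have hne : c m ≠ c (m+1) := hp.2 m (by omega)
  have hcard : ({c m, c (m+1)} : Finset ℕ).card ≤ 2 :=
    (Finset.card_insert_le _ _).trans (by simp)
  have h1 : 2 ≤ (L (m+2-1)).card := hs.2.1
  have h1' : 2 ≤ (L (m+1)).card := by
    have : m + 2 - 1 = m + 1 := by omega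
    rwa [this] at h1
  exact Finset.eq_of_subset_of_card_le hsub (by omega)

/-- the union over `[2, m+1]` is inside the reversed-instance `A`-part -/
lemma mem_revA {m L x j} (h2 : 2 ≤ j) (hj : j ≤ m + 1) (hx : x ∈ L j) :
    x ∈ (Finset.range m).biUnion (revL (m+2) L) := by
  rw [Finset.mem_biUnion]
  refine ⟨m + 1 - j, Finset.mem_range.mpr (by omega), ?_⟩
  show x ∈ L (m + 2 - 1 - (m + 1 - j))
  have : m + 2 - 1 - (m + 1 - j) = j := by omega
  rwa [this]

lemma lemU {m L} (hm : 2 ≤ m) (hs : Sizes (m+2) L)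
    (hU : 4 ≤ ((Finset.range (m+2)).biUnion L).card)
    (hR : ∀ b ∈ L (m+1), (uR m L b).card ≤ 3)
    (hL : ∀ a ∈ L 0, (uR m (revL (m+2) L) a).card ≤ 3) : False := by
  set A := (Finset.range m).biUnion L with hA
  set B := (Finset.range m).biUnion (revL (m+2) L) with hB
  have hL1c : 3 ≤ (L 1).card := hs.2.2 1 (by omega) (by omega)
  have hLmc : 3 ≤ (L m).card := hs.2.2 m (by omega) (by omega)
  have hL0c : 2 ≤ (L 0).card := hs.1
  have hLm1c : 2 ≤ (L (m+1)).card := by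
    have := hs.2.1
    have he : m + 2 - 1 = m + 1 := by omega
    rwa [he] at this
  have hL1A : L 1 ⊆ A := Finset.subset_biUnion_of_mem L (Finset.mem_range.mpr (by omega))
  have hL0A : L 0 ⊆ A := Finset.subset_biUnion_of_mem L (Finset.mem_range.mpr (by omega))
  have hLmB : L m ⊆ B := fun x hx => mem_revA (by omega) (by omega) hx
  have hLm1B : L (m+1) ⊆ B := fun x hx => mem_revA (by omega) (by omega) hx
  -- |A| ≤ 3
  obtain ⟨b₀, hb₀⟩ := Finset.card_pos.mp (by omega : 0 < (L (m+1)).card)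
  have hAcard : A.card ≤ 3 :=
    le_trans (Finset.card_le_card (Finset.subset_union_left)) (hR b₀ hb₀)
  obtain ⟨a₀, ha₀⟩ := Finset.card_pos.mp (by omega : 0 < (L 0).card)
  have hBcard : B.card ≤ 3 :=
    le_trans (Finset.card_le_card (Finset.subset_union_left)) (hL a₀ ha₀)
  -- A = L 1, B = L m
  have hAeq : A = L 1 := (Finset.eq_of_subset_of_card_le hL1A (by omega)).symm
  have hBeq : B = L m := (Finset.eq_of_subset_of_card_le hLmB (by omega)).symm
  have hA3 : 3 ≤ A.card := by rw [hAeq]; exact hL1c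
  have hB3 : 3 ≤ B.card := by rw [hBeq]; exact hLmc
  -- L m ⊆ A
  have hLmA : L m ⊆ A := by
    obtain ⟨b₁, hb₁, b₂, hb₂, hne⟩ :=
      Finset.one_lt_card.mp (show 1 < (L (m+1)).card by omega)
    intro t ht
    have key : ∀ b ∈ L (m+1), t ≠ b → t ∈ A := by
      intro b hb htb
      have hsub : A ∪ (L m).erase b ⊆ A := by
        apply Finset.union_subset Finset.Subset.rfl
        have : (A ∪ (L m).erase b) = A := by
          apply (Finset.eq_of_subset_of_card_le Finset.subset_union_left ?_).symm
          exact le_trans (hR b hb) (by omega)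
        rw [← this]
        exact Finset.subset_union_right
      exact hsub (Finset.mem_union_right _ (Finset.mem_erase.mpr ⟨htb, ht⟩))
    rcases eq_or_ne t b₁ with rfl | hne1
    · exact key b₂ hb₂ hne
    · exact key b₁ hb₁ hne1
  -- L 1 ⊆ B
  have hL1B : L 1 ⊆ B := by
    obtain ⟨a₁, ha₁, a₂, ha₂, hne⟩ :=
      Finset.one_lt_card.mp (show 1 < (L 0).card by omega)
    intro t ht
    have key : ∀ a ∈ L 0, t ≠ a → t ∈ B := by
      intro a ha hta
      have : (B ∪ ((revL (m+2) L) m).erase a) = B := by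
        apply (Finset.eq_of_subset_of_card_le Finset.subset_union_left ?_).symm
        exact le_trans (hL a ha) (by omega)
      rw [← this]
      apply Finset.mem_union_right
      apply Finset.mem_erase.mpr
      refine ⟨hta, ?_⟩
      show t ∈ L (m + 2 - 1 - m)
      have he : m + 2 - 1 - m = 1 := by omega
      rwa [he]
    rcases eq_or_ne t a₁ with rfl | hne1
    · exact key a₂ ha₂ hne
    · exact key a₁ ha₁ hne1
  -- everything collapses into A
  have hBA : B ⊆ A := hBeq ▸ hLmA
  have hU_sub : (Finset.range (m+2)).biUnion L ⊆ A := by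
    intro x hx
    rw [Finset.mem_biUnion] at hx
    obtain ⟨i, hi, hx⟩ := hx
    rw [Finset.mem_range] at hi
    rcases Nat.lt_or_ge i m with h | h
    · exact Finset.subset_biUnion_of_mem L (Finset.mem_range.mpr h) hx
    · rcases Nat.eq_or_lt_of_le h with rfl | h2
      · exact hLmA hx
      · have : i = m + 1 := by omega
        subst this
        exact hBA (hLm1B hx)
  have := Finset.card_le_card hU_sub
  omega

end S14
namespace S14

lemma sfree_congr {n : ℕ} {L L' : ℕ → Finset ℕ} {c i} (hL : ∀ k < n, L k = L' k)
    (hi : i < n) (h : SFree n L c i) : SFree n L' c i := by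
  obtain ⟨x, hx, h1, h2, h3⟩ := h
  exact ⟨x, (hL i hi) ▸ hx, h1, h2, h3⟩

lemma sgood_congr {n : ℕ} {L L' : ℕ → Finset ℕ} {c} (hL : ∀ k < n, L k = L' k)
    (h : SGood n L c) : SGood n L' c := by
  obtain ⟨hp, i, hi, hf⟩ := h
  exact ⟨sproper_congr hL hp, i, hi, sfree_congr hL hi hf⟩

lemma rigidP_congr {m : ℕ} {L L' : ℕ → Finset ℕ} {b} (hL : ∀ k < m + 2, L k = L' k)
    (h : RigidP m L b) : RigidP m L' b := by
  obtain ⟨c, h1, h2, h3, h4⟩ := h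
  refine ⟨c, sproper_congr hL h1, h2, ?_, sgood_congr hL h4⟩
  intro i hi hf
  exact h3 i hi (sfree_congr (fun k hk => (hL k hk).symm) (by omega) hf)

lemma uR_congr {m : ℕ} {L L' : ℕ → Finset ℕ} {b} (hL : ∀ k < m + 2, L k = L' k) :
    uR m L b = uR m L' b := by
  unfold uR
  rw [hL m (by omega)]
  congr 1
  apply Finset.biUnion_congr rfl
  intro i hi
  exact hL i (by rw [Finset.mem_range] at hi; omega)

lemma core {m : ℕ} {L : ℕ → Finset ℕ} (hm : 2 ≤ m) (hs : Sizes (m+2) L)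
    (hU : 4 ≤ ((Finset.range (m+2)).biUnion L).card)
    {c : ℕ → ℕ} (hpc : SProper (m+2) L c) (hfc : ∀ i < m + 1, ¬ SFree (m+2) L c i)
    {d : ℕ → ℕ} (hpd : SProper (m+2) L d) (hd0 : d 0 = c 1)
    (hfd : ∀ i, 1 ≤ i → i < m + 2 → ¬ SFree (m+2) L d i)
    (hfree : SFree (m+2) L d 0) : False := by
  have hW0 : L 0 = {c 0, c 1} := window0 hs hpc (hfc 0 (by omega))
  have hWc : ∀ j < m, L (j+1) = {c j, c (j+1), c (j+2)} ∧ c j ≠ c (j+2) :=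
    fun j hj => windowi hs hpc hj (hfc (j+1) (by omega))
  have hWd : ∀ j < m, L (j+1) = {d j, d (j+1), d (j+2)} ∧ d j ≠ d (j+2) :=
    fun j hj => windowi hs hpd hj (hfd (j+1) (by omega) (by omega))
  have hWl : L (m+1) = {d m, d (m+1)} :=
    windowlast hs hpd (hfd (m+1) (by omega) (by omega))
  -- d 1 = c 2
  have hd1 : d 1 = c 2 := by
    have hmem : d 1 ∈ ({c 0, c 1, c 2} : Finset ℕ) := by
      rw [← (hWc 0 (by omega)).1]
      exact hpd.1 1 (by omega)
    have hne1 : d 1 ≠ c 1 := by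
      rw [← hd0]; exact Ne.symm (hpd.2 0 (by omega))
    have hne0 : d 1 ≠ c 0 := by
      obtain ⟨x, hx, hxne, _, hnext⟩ := hfree
      rw [hW0] at hx
      simp only [Finset.mem_insert, Finset.mem_singleton] at hx
      rcases hx with rfl | rfl
      · exact hnext (by omega)
      · exact absurd hd0.symm hxne
    simp only [Finset.mem_insert, Finset.mem_singleton] at hmem
    tauto
  -- main forward induction
  have key : ∀ k, k + 1 ≤ m → d k = c (k+1) ∧ d (k+1) = c (k+2) := by
    intro k
    induction k with
    | zero => exact fun _ => ⟨hd0, hd1⟩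
    | succ k ihk =>
      intro hk1
      obtain ⟨e1, e2⟩ := ihk (by omega)
      -- d (k+2) = c k
      have hdk2 : d (k+2) = c k := by
        have hmem : d (k+2) ∈ ({c k, c (k+1), c (k+2)} : Finset ℕ) := by
          rw [← (hWc k (by omega)).1, (hWd k (by omega)).1]
          simp
        have hne1 : d (k+2) ≠ c (k+1) := by
          rw [← e1]; exact Ne.symm (hWd k (by omega)).2
        have hne2 : d (k+2) ≠ c (k+2) := by
          rw [← e2]; exact Ne.symm (hpd.2 (k+1) (by omega))
        simp only [Finset.mem_insert, Finset.mem_singleton] at hmem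
        tauto
      -- c k = c (k+3)
      have hper : c k = c (k+3) := by
        have hmem : c k ∈ ({c (k+1), c (k+2), c (k+3)} : Finset ℕ) := by
          rw [← (hWc (k+1) (by omega)).1, ← hdk2]
          exact hpd.1 (k+2) (by omega)
        have hne1 : c k ≠ c (k+1) := hpc.2 k (by omega)
        have hne2 : c k ≠ c (k+2) := (hWc k (by omega)).2
        simp only [Finset.mem_insert, Finset.mem_singleton] at hmem
        tauto
      exact ⟨e2, hdk2.trans hper⟩
  -- periodicity
  have per : ∀ k, k + 2 ≤ m → c k = c (k+3) := by
    intro k hk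
    obtain ⟨e1, e2⟩ := key k (by omega)
    have hdk2 : d (k+2) = c k := by
      have hmem : d (k+2) ∈ ({c k, c (k+1), c (k+2)} : Finset ℕ) := by
        rw [← (hWc k (by omega)).1, (hWd k (by omega)).1]
        simp
      have hne1 : d (k+2) ≠ c (k+1) := by
        rw [← e1]; exact Ne.symm (hWd k (by omega)).2
      have hne2 : d (k+2) ≠ c (k+2) := by
        rw [← e2]; exact Ne.symm (hpd.2 (k+1) (by omega))
      simp only [Finset.mem_insert, Finset.mem_singleton] at hmem
      tauto
    have hmem : c k ∈ ({c (k+1), c (k+2), c (k+3)} : Finset ℕ) := by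
      rw [← (hWc (k+1) (by omega)).1, ← hdk2]
      exact hpd.1 (k+2) (by omega)
    have hne1 : c k ≠ c (k+1) := hpc.2 k (by omega)
    have hne2 : c k ≠ c (k+2) := (hWc k (by omega)).2
    simp only [Finset.mem_insert, Finset.mem_singleton] at hmem
    tauto
  set P : Finset ℕ := {c 0, c 1, c 2} with hP
  have cP : ∀ j, j ≤ m + 1 → c j ∈ P := by
    intro j
    induction j using Nat.strong_induction_on with
    | _ j ihj =>
      intro hj
      match j, hj with
      | 0, _ => simp [hP]
      | 1, _ => simp [hP]
      | 2, _ => simp [hP]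
      | (k+3), hj =>
        rw [← per k (by omega)]
        exact ihj k (by omega) (by omega)
  -- d m = c (m+1), d (m+1) ∈ P
  obtain ⟨k₀, rfl⟩ : ∃ k, m = k + 1 := ⟨m - 1, by omega⟩
  have hdm : d (k₀+1) = c (k₀+2) := (key k₀ (by omega)).2
  have hdm1P : d (k₀+2) ∈ P := by
    have hmem : d (k₀+2) ∈ L (k₀+1) := by
      rw [(hWd k₀ (by omega)).1]; simp
    rw [(hWc k₀ (by omega)).1] at hmem
    simp only [Finset.mem_insert, Finset.mem_singleton] at hmem
    rcases hmem with h | h | h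
    · rw [h]; exact cP k₀ (by omega)
    · rw [h]; exact cP (k₀+1) (by omega)
    · rw [h]; exact cP (k₀+2) (by omega)
  -- all lists inside P
  have LP : ∀ i < (k₀+1) + 2, L i ⊆ P := by
    intro i hi
    rcases Nat.eq_zero_or_pos i with rfl | hpos
    · rw [hW0]
      intro x hx
      simp only [Finset.mem_insert, Finset.mem_singleton] at hx
      rcases hx with rfl | rfl
      · exact cP 0 (by omega)
      · exact cP 1 (by omega)
    rcases Nat.lt_or_ge i ((k₀+1)+1) with hlt | hge
    · obtain ⟨j, rfl⟩ : ∃ j, i = j + 1 := ⟨i - 1, by omega⟩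
      rw [(hWc j (by omega)).1]
      intro x hx
      simp only [Finset.mem_insert, Finset.mem_singleton] at hx
      rcases hx with rfl | rfl | rfl
      · exact cP j (by omega)
      · exact cP (j+1) (by omega)
      · exact cP (j+2) (by omega)
    · have : i = (k₀+1) + 1 := by omega
      subst this
      rw [hWl]
      intro x hx
      simp only [Finset.mem_insert, Finset.mem_singleton] at hx
      rcases hx with rfl | rfl
      · rw [hdm]; exact cP (k₀+2) (by omega)
      · exact hdm1P
  have hUP : (Finset.range ((k₀+1)+2)).biUnion L ⊆ P := by
    intro x hx
    rw [Finset.mem_biUnion] at hx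
    obtain ⟨i, hi, hx⟩ := hx
    exact LP i (Finset.mem_range.mp hi) hx
  have h1 := Finset.card_le_card hUP
  have h2 : P.card ≤ 3 :=
    (Finset.card_insert_le _ _).trans (by
      have := Finset.card_insert_le (c 1) ({c 2} : Finset ℕ)
      simp at this ⊢
      omega)
  omega

end S14
namespace S14

lemma halfG {m : ℕ} {L : ℕ → Finset ℕ} (hm : 2 ≤ m) (hs : Sizes (m+2) L)
    (hU : 4 ≤ ((Finset.range (m+2)).biUnion L).card)
    (hex : ∃ b ∈ L (m+1), 4 ≤ (uR m L b).card) :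
    (∃ b ∈ L (m+1), 4 ≤ (uR m L b).card ∧ ¬ RigidP m L b) ∨
    (∃ b ∈ (revL (m+2) L) (m+1), 4 ≤ (uR m (revL (m+2) L) b).card ∧
      ¬ RigidP m (revL (m+2) L) b) := by
  obtain ⟨b₀, hb₀, hu₀⟩ := hex
  by_cases hr : RigidP m L b₀
  swap
  · exact Or.inl ⟨b₀, hb₀, hu₀, hr⟩
  obtain ⟨c, hpc, hcb, hfc, hgc⟩ := hr
  have hW0 : L 0 = {c 0, c 1} := window0 hs hpc (hfc 0 (by omega))
  have hWc : ∀ j < m, L (j+1) = {c j, c (j+1), c (j+2)} ∧ c j ≠ c (j+2) :=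
    fun j hj => windowi hs hpc hj (hfc (j+1) (by omega))
  have hrev0 : revL (m+2) L (m+1) = L 0 := by
    show L (m + 2 - 1 - (m+1)) = L 0
    congr 1
    omega
  have hmemrev : c 1 ∈ revL (m+2) L (m+1) := by
    rw [hrev0, hW0]; simp
  -- the reversed-side union for colour c 1 contains everything
  have hurev : 4 ≤ (uR m (revL (m+2) L) (c 1)).card := by
    refine le_trans hU (Finset.card_le_card ?_)
    intro x hx
    rw [Finset.mem_biUnion] at hx
    obtain ⟨i, hi, hx⟩ := hx
    rw [Finset.mem_range] at hi
    have hrevm : revL (m+2) L m = L 1 := by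
      show L (m + 2 - 1 - m) = L 1
      congr 1
      omega
    have hc1L2 : c 1 ∈ L 2 := by
      rw [show (2:ℕ) = 1 + 1 by rfl, (hWc 1 (by omega)).1]
      simp
    have hBmem : ∀ y, y ∈ L 2 → y ∈ uR m (revL (m+2) L) (c 1) := by
      intro y hy
      exact Finset.mem_union_left _ (mem_revA (by omega) (by omega) hy)
    rcases Nat.lt_or_ge i 2 with hlt | hge
    · -- i = 0 or 1 : x ∈ {c 0, c 1, c 2}
      have hx012 : x = c 0 ∨ x = c 1 ∨ x = c 2 := by
        interval_cases i
        · rw [hW0] at hx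
          simp only [Finset.mem_insert, Finset.mem_singleton] at hx
          tauto
        · rw [show (1:ℕ) = 0 + 1 by rfl, (hWc 0 (by omega)).1] at hx
          simp only [Finset.mem_insert, Finset.mem_singleton] at hx
          tauto
      rcases hx012 with rfl | rfl | rfl
      · -- c 0 ∈ (L 1).erase (c 1)
        apply Finset.mem_union_right
        rw [hrevm]
        apply Finset.mem_erase.mpr
        refine ⟨hpc.2 0 (by omega), ?_⟩
        rw [show (1:ℕ) = 0 + 1 by rfl, (hWc 0 (by omega)).1]
        simp
      · exact hBmem _ hc1L2
      · apply hBmem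
        rw [show (2:ℕ) = 1 + 1 by rfl, (hWc 1 (by omega)).1]
        simp
    · exact Finset.mem_union_left _ (mem_revA hge (by omega) hx)
  by_cases hr2 : RigidP m (revL (m+2) L) (c 1)
  swap
  · exact Or.inr ⟨c 1, hmemrev, hurev, hr2⟩
  -- both chains exist : contradiction
  exfalso
  obtain ⟨c', hpc', hcb', hfc', hgc'⟩ := hr2
  set d := revc (m+2) c' with hd
  have hpd : SProper (m+2) L d :=
    sproper_congr revL_invol (rev_proper hpc')
  have hd0 : d 0 = c 1 := by
    rw [hd, revc_lt (by omega)]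
    show c' (m + 2 - 1 - 0) = c 1
    have he : m + 2 - 1 - 0 = m + 1 := by omega
    rw [he, hcb']
  have hrevd : revc (m+2) d = c' := revc_invol
  have hfd : ∀ i, 1 ≤ i → i < m + 2 → ¬ SFree (m+2) L d i := by
    intro i h1 h2 hf
    have := rev_free h2 hf
    rw [hrevd] at this
    exact hfc' (m + 2 - 1 - i) (by omega) this
  have hfree : SFree (m+2) L d 0 := by
    obtain ⟨hpp, i, hi, hfi⟩ := hgc'
    have hieq : i = m + 1 := by
      by_contra hne
      exact hfc' i (by omega) hfi
    subst hieq
    have := rev_free (by omega : m + 1 < m + 2) hfi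
    have hidx : m + 2 - 1 - (m+1) = 0 := by omega
    rw [hidx] at this
    exact sfree_congr revL_invol (by omega) this
  exact core hm hs hU hpc hfc hpd hd0 hfd hfree

end S14
namespace S14

lemma mini3 {L} (hs : Sizes 3 L) : ∃ b ∈ L 2, 3 ≤ (uR 1 L b).card := by
  by_contra hcon
  push_neg at hcon
  have hL2 : 2 ≤ (L 2).card := hs.2.1
  obtain ⟨b₁, hb₁, b₂, hb₂, hne⟩ := Finset.one_lt_card.mp (show 1 < (L 2).card by omega)
  have h₁ := hcon b₁ hb₁
  have h₂ := hcon b₂ hb₂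
  have hsub : L 1 ⊆ uR 1 L b₁ ∪ uR 1 L b₂ := by
    intro t ht
    rcases eq_or_ne t b₁ with rfl | hne1
    · exact Finset.mem_union_right _ (Finset.mem_union_right _
        (Finset.mem_erase.mpr ⟨hne, ht⟩))
    · exact Finset.mem_union_left _ (Finset.mem_union_right _
        (Finset.mem_erase.mpr ⟨hne1, ht⟩))
  have hsub0 : L 0 ⊆ uR 1 L b₁ ∩ uR 1 L b₂ := by
    intro t ht
    have hm : t ∈ (Finset.range 1).biUnion L := by
      simp only [Finset.mem_biUnion, Finset.mem_range]
      exact ⟨0, by omega, ht⟩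
    exact Finset.mem_inter.mpr ⟨Finset.mem_union_left _ hm, Finset.mem_union_left _ hm⟩
  have hc1 := Finset.card_le_card hsub
  have hc0 := Finset.card_le_card hsub0
  have hie := Finset.card_union_add_card_inter (uR 1 L b₁) (uR 1 L b₂)
  have hL1 : 3 ≤ (L 1).card := hs.2.2 1 (by omega) (by omega)
  have hL0 : 2 ≤ (L 0).card := hs.1
  omega

lemma peel_main {m : ℕ} {L α β} {b : ℕ} (hs : Sizes (m+2) L)
    (hα : SGood (m+2) L α) (hβ : SGood (m+2) L β)
    (hjunk : ∀ i, m + 2 ≤ i → α i = β i)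
    (hb : b ∈ L (m+1)) (hnr : ¬ RigidP m L b)
    (ih : ∀ α' β', SGood (m+1) (restrL m L b) α' → SGood (m+1) (restrL m L b) β' →
      (∀ i, m + 1 ≤ i → α' i = β' i) → Reach (m+1) (restrL m L b) α' β') :
    Reach (m+2) L α β := by
  obtain ⟨α', hrα, hpα, hαb⟩ := reach_last hs hα hb
  obtain ⟨β', hrβ, hpβ, hβb⟩ := reach_last hs hβ hb
  have hgα' := reach_good hrα hα
  have hgβ' := reach_good hrβ hβ
  have hfr : ∀ (c : ℕ → ℕ), SProper (m+2) L c → c (m+1) = b → SGood (m+2) L c →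
      ∃ i < m + 1, SFree (m+2) L c i := by
    intro c h1 h2 h3
    by_contra h
    push_neg at h
    exact hnr ⟨c, h1, h2, fun i hi hf => (h i hi) hf, h3⟩
  have hrestrα := restr_good hpα hαb (hfr α' hpα hαb hgα')
  have hrestrβ := restr_good hpβ hβb (hfr β' hpβ hβb hgβ')
  have hj : ∀ i, m + 1 ≤ i → α' i = β' i := by
    intro i hi
    rcases eq_or_lt_of_le hi with h | h
    · rw [← h, hαb, hβb]
    · rw [reach_junk hrα i (by omega), reach_junk hrβ i (by omega)]
      exact hjunk i (by omega)
  exact hrα.trans ((lift_reach (ih α' β' hrestrα hrestrβ hj) hαb hb).trans (reach_symm hrβ))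

lemma claimG {m L} (hm : 2 ≤ m) (hs : Sizes (m+2) L)
    (hU : 4 ≤ ((Finset.range (m+2)).biUnion L).card) :
    (∃ b ∈ L (m+1), 4 ≤ (uR m L b).card ∧ ¬ RigidP m L b) ∨
    (∃ b ∈ (revL (m+2) L) (m+1), 4 ≤ (uR m (revL (m+2) L) b).card ∧
      ¬ RigidP m (revL (m+2) L) b) := by
  by_cases hex : ∃ b ∈ L (m+1), 4 ≤ (uR m L b).card
  · exact halfG hm hs hU hex
  by_cases hex2 : ∃ a ∈ (revL (m+2) L) (m+1), 4 ≤ (uR m (revL (m+2) L) a).card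
  · have h := halfG hm (rev_sizes (by omega) hs)
      (by rw [rev_union]; exact hU) hex2
    rcases h with ⟨b, h1, h2, h3⟩ | ⟨b, h1, h2, h3⟩
    · exact Or.inr ⟨b, h1, h2, h3⟩
    · refine Or.inl ⟨b, ?_, ?_, ?_⟩
      · rwa [revL_invol (L := L) (m+1) (by omega : m + 1 < m + 2)] at h1
      · rwa [uR_congr (L := revL (m+2) (revL (m+2) L)) (L' := L) (b := b)
          (fun k hk => revL_invol k (by omega))] at h2
      · intro hr
        exact h3 (rigidP_congr (fun k hk => (revL_invol k hk).symm) hr)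
  · exfalso
    push_neg at hex hex2
    apply lemU hm hs hU
    · intro b hb
      have := hex b hb
      omega
    · intro a ha
      have ha' : a ∈ (revL (m+2) L) (m+1) := by
        have he : revL (m+2) L (m+1) = L 0 := by
          show L (m + 2 - 1 - (m+1)) = L 0
          congr 1
          omega
        rwa [he]
      have := hex2 a ha'
      omega

theorem SMain : ∀ n L α β, 3 ≤ n → Sizes n L →
    (4 ≤ n → 4 ≤ ((Finset.range n).biUnion L).card) →
    SGood n L α → SGood n L β → (∀ i, n ≤ i → α i = β i) → Reach n L α β := by
  intro n
  induction n using Nat.strong_induction_on with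
  | _ n ihn =>
  intro L α β hn hs hU hα hβ hjunk
  obtain ⟨m, rfl⟩ : ∃ m, n = m + 2 := ⟨n - 2, by omega⟩
  have hm1 : 1 ≤ m := by omega
  rcases eq_or_lt_of_le hn with h3 | h4
  · -- n = 3
    obtain rfl : m = 1 := by omega
    obtain ⟨b, hb, hu3⟩ := mini3 hs
    obtain ⟨α', hrα, hpα, hαb⟩ := reach_last hs hα hb
    obtain ⟨β', hrβ, hpβ, hβb⟩ := reach_last hs hβ hb
    have hbase : Reach 2 (restrL 1 L b) α' β' := by
      apply base2
      · rw [restr_union]; exact hu3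
      · exact restr_proper hpα hαb
      · exact restr_proper hpβ hβb
      · intro i hi
        rcases eq_or_lt_of_le hi with h | h
        · rw [← h, hαb, hβb]
        · rw [reach_junk hrα i (by omega), reach_junk hrβ i (by omega)]
          exact hjunk i (by omega)
    exact hrα.trans ((lift_reach hbase hαb hb).trans (reach_symm hrβ))
  · -- n ≥ 4
    have hm2 : 2 ≤ m := by omega
    have hU4 := hU (by omega)
    have hIH : ∀ (L' : ℕ → Finset ℕ), Sizes (m+1) L' →
        4 ≤ ((Finset.range (m+1)).biUnion L').card →
        ∀ α' β', SGood (m+1) L' α' → SGood (m+1) L' β' →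
        (∀ i, m + 1 ≤ i → α' i = β' i) → Reach (m+1) L' α' β' := by
      intro L' hs' hu' α' β' g1 g2 j
      exact ihn (m+1) (by omega) L' α' β' (by omega) hs' (fun _ => hu') g1 g2 j
    rcases claimG hm2 hs hU4 with ⟨b, hb, hu, hnr⟩ | ⟨b, hb, hu, hnr⟩
    · apply peel_main hs hα hβ hjunk hb hnr
      intro α' β' g1 g2 j
      exact hIH _ (restr_sizes hm1 hs) (by rw [restr_union]; exact hu) α' β' g1 g2 j
    · have hrev : Reach (m+2) (revL (m+2) L) (revc (m+2) α) (revc (m+2) β) := by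
        apply peel_main (rev_sizes (by omega) hs) (rev_good hα) (rev_good hβ) ?_ hb hnr
        · intro α' β' g1 g2 j
          exact hIH _ (restr_sizes hm1 (rev_sizes (by omega) hs))
            (by rw [restr_union]; exact hu) α' β' g1 g2 j
        · intro i hi
          simp only [revc, if_neg (by omega : ¬ i < m + 2)]
          exact hjunk i hi
      have r2 := rev_reach hrev
      rw [revc_invol, revc_invol] at r2
      exact reach_congr revL_invol r2

end S14
namespace S14

section PathExtract

variable {V : Type*} [Fintype V] [DecidableEq V] {G : SimpleGraph V}

lemma closure_univ (hG : G.Connected) {S : Set V}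
    (hcl : ∀ v ∈ S, ∀ w, G.Adj v w → w ∈ S) {v₀ : V} (hv : v₀ ∈ S) :
    ∀ v, v ∈ S := by
  have key : ∀ (u v : V) (_ : G.Walk u v), u ∈ S → v ∈ S := by
    intro u v p
    induction p with
    | nil => exact id
    | cons h _ ih => exact fun hu => ih (hcl _ hu _ h)
  intro v
  obtain ⟨p⟩ := hG.preconnected v₀ v
  exact key _ _ p hv

lemma nbhd_of_deg_one {v w : V} (h : G.Adj v w) (hd : (G.neighborSet v).ncard = 1) :
    G.neighborSet v = {w} := by
  obtain ⟨a, ha⟩ := Set.ncard_eq_one.mp hd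
  have : w ∈ G.neighborSet v := h
  rw [ha] at this ⊢
  simp only [Set.mem_singleton_iff] at this
  rw [this]

lemma nbhd_pair {u v w : V} (hu : G.Adj v u) (hw : G.Adj v w) (hne : u ≠ w)
    (hd : (G.neighborSet v).ncard ≤ 2) : G.neighborSet v = {u, w} := by
  have hsub : {u, w} ⊆ G.neighborSet v := by
    intro x hx
    rcases hx with rfl | hx
    · exact hu
    · rw [hx]; exact hw
  have hcard : (({u, w} : Set V)).ncard = 2 := Set.ncard_pair hne
  exact (Set.eq_of_subset_of_ncard_le hsub (by omega) (Set.toFinite _)).symm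

/-- there is an enumeration of a connected graph with max degree ≤ 2 and a leaf -/
lemma path_enum (hG : G.Connected)
    (hdeg : ∀ v, (G.neighborSet v).ncard ≤ 2)
    (hleaf : ∃ v, (G.neighborSet v).ncard = 1)
    (hn : 2 ≤ Fintype.card V) :
    ∃ f : ℕ → V,
      (∀ i j, i < Fintype.card V → j < Fintype.card V → f i = f j → i = j) ∧
      (∀ v, ∃ i < Fintype.card V, f i = v) ∧
      (∀ i j, i < Fintype.card V → j < Fintype.card V →
        (G.Adj (f i) (f j) ↔ (i + 1 = j ∨ j + 1 = i))) := by
  classical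
  set n := Fintype.card V with hnn
  obtain ⟨v₀, hv₀⟩ := hleaf
  have hne0 : (G.neighborSet v₀).Nonempty := by
    rw [← Set.ncard_pos (Set.toFinite _)]
    omega
  obtain ⟨w₀, hw₀⟩ := hne0
  -- the step function
  let nxt : V → V → V := fun p c =>
    if h : ∃ x, G.Adj c x ∧ x ≠ p then h.choose else p
  let FF : ℕ → V × V := fun k => Nat.recAux (v₀, w₀) (fun _ pr => (pr.2, nxt pr.1 pr.2)) k
  set f : ℕ → V := fun k => (FF k).1 with hf
  have hFF1 : ∀ k, (FF k).2 = f (k+1) := fun k => rfl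
  have hf0 : f 0 = v₀ := rfl
  have hf1 : f 1 = w₀ := rfl
  have hfs : ∀ k, f (k+2) = nxt (f k) (f (k+1)) := fun k => rfl
  have hadj01 : G.Adj (f 0) (f 1) := hw₀
  have hN0 : G.neighborSet (f 0) = {f 1} := nbhd_of_deg_one hadj01 hv₀
  -- the inductive invariant
  have main : ∀ k, k + 1 ≤ n - 1 →
      (∀ i j, i ≤ k + 1 → j ≤ k + 1 → f i = f j → i = j) ∧
      (∀ i, i < k + 1 → G.Adj (f i) (f (i+1))) := by
    intro k
    induction k with
    | zero =>
      intro _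
      constructor
      · intro i j hi hj he
        interval_cases i <;> interval_cases j <;> first | rfl | (exfalso; exact G.irrefl (he ▸ hadj01)) | (exfalso; exact G.irrefl (he ▸ hadj01.symm))
      · intro i hi
        have : i = 0 := by omega
        rw [this]
        exact hadj01
    | succ k ih =>
      intro hk1
      obtain ⟨hinj, hadj⟩ := ih (by omega)
      -- interior neighbourhoods among f 0..f (k+1)
      have hNint : ∀ i, 0 < i → i < k + 1 →
          G.neighborSet (f i) = {f (i-1), f (i+1)} := by
        intro i h0 hik
        obtain ⟨i', rfl⟩ : ∃ i', i = i' + 1 := ⟨i - 1, by omega⟩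
        have h1 : G.Adj (f (i'+1)) (f i') := (hadj i' (by omega)).symm
        have h2 : G.Adj (f (i'+1)) (f (i'+2)) := hadj (i'+1) (by omega)
        have hne : f i' ≠ f (i'+2) := by
          intro he
          have := hinj i' (i'+2) (by omega) (by omega) he
          omega
        have := nbhd_pair h1 h2 hne (hdeg (f (i'+1)))
        simpa using this
      -- degree of f (k+1) must be 2
      have hdeg2 : ∃ x, G.Adj (f (k+1)) x ∧ x ≠ f k := by
        by_contra hcon
        push_neg at hcon
        have hNlast : G.neighborSet (f (k+1)) = {f k} := by
          apply nbhd_of_deg_one (hadj k (by omega)).symm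
          have hsub : G.neighborSet (f (k+1)) ⊆ {f k} := by
            intro x hx
            simp only [Set.mem_singleton_iff]
            by_contra hne
            exact hne (hcon x hx)
          have h1 : f k ∈ G.neighborSet (f (k+1)) := (hadj k (by omega)).symm
          have := Set.ncard_le_ncard hsub (Set.toFinite _)
          have h2 : ({f k} : Set V).ncard = 1 := Set.ncard_singleton _
          have h3 : 0 < (G.neighborSet (f (k+1))).ncard := by
            rw [Set.ncard_pos (Set.toFinite _)]
            exact ⟨f k, h1⟩
          omega
        -- closure : the image of [0, k+1] is closed under adjacency
        set S : Set V := {v | ∃ i ≤ k + 1, f i = v} with hS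
        have hcl : ∀ v ∈ S, ∀ w, G.Adj v w → w ∈ S := by
          rintro v ⟨i, hi, rfl⟩ w hw
          rcases Nat.eq_zero_or_pos i with rfl | hpos
          · have : w ∈ G.neighborSet (f 0) := hw
            rw [hN0] at this
            exact ⟨1, by omega, this.symm⟩
          rcases Nat.lt_or_ge i (k+1) with hik | hik
          · have : w ∈ G.neighborSet (f i) := hw
            rw [hNint i hpos hik] at this
            rcases this with h | h
            · exact ⟨i - 1, by omega, h.symm⟩
            · exact ⟨i + 1, by omega, (Set.mem_singleton_iff.mp h).symm⟩
          · have hieq : i = k + 1 := by omega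
            rw [hieq] at hw
            have : w ∈ G.neighborSet (f (k+1)) := hw
            rw [hNlast] at this
            exact ⟨k, by omega, (Set.mem_singleton_iff.mp this).symm⟩
        have hall := closure_univ hG hcl (⟨0, by omega, hf0⟩ : v₀ ∈ S)
        -- cardinality contradiction
        have hcard : n ≤ k + 2 := by
          have himg : (Finset.univ : Finset V) ⊆
              (Finset.range (k+2)).image f := by
            intro v _
            obtain ⟨i, hi, he⟩ := hall v
            exact Finset.mem_image.mpr ⟨i, Finset.mem_range.mpr (by omega), he⟩
          have := Finset.card_le_card himg
          have h2 := Finset.card_image_le (s := Finset.range (k+2)) (f := f)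
          simp only [Finset.card_range, Finset.card_univ] at this h2 ⊢
          omega
        omega
      -- define the next vertex
      have hnxt : G.Adj (f (k+1)) (f (k+2)) ∧ f (k+2) ≠ f k := by
        have he : f (k+2) =
            if h : ∃ x, G.Adj (f (k+1)) x ∧ x ≠ f k then h.choose else f k := rfl
        rw [he, dif_pos hdeg2]
        exact ⟨hdeg2.choose_spec.1, hdeg2.choose_spec.2⟩
      -- new injectivity
      have hnew : ∀ j, j ≤ k + 1 → f (k+2) ≠ f j := by
        intro j hj he
        rcases Nat.lt_or_ge j (k+1) with hjk | hjk
        · rcases Nat.eq_zero_or_pos j with rfl | hpos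
          · -- f (k+2) = f 0 : then f (k+1) ∈ N (f 0) = {f 1}
            have : f (k+1) ∈ G.neighborSet (f (k+2)) := hnxt.1.symm
            rw [he, hN0] at this
            have := hinj (k+1) 1 (by omega) (by omega) this
            -- k + 1 = 1, so k = 0, j = 0 = k : but f (k+2) ≠ f k
            have hk0 : k = 0 := by omega
            subst hk0
            exact hnxt.2 he
          · rcases Nat.lt_or_ge j (k+1) with h2 | h2
            · by_cases hjk1 : j = k
              · subst hjk1
                exact hnxt.2 he
              · have : f (k+1) ∈ G.neighborSet (f j) := by
                  rw [← he]; exact hnxt.1.symm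
                rw [hNint j hpos h2] at this
                rcases this with h | h
                · have := hinj (k+1) (j-1) (by omega) (by omega) h
                  omega
                · have := hinj (k+1) (j+1) (by omega) (by omega)
                    (Set.mem_singleton_iff.mp h)
                  omega
            · omega
        · have hjeq : j = k + 1 := by omega
          subst hjeq
          exact G.irrefl (he ▸ hnxt.1)
      constructor
      · intro i j hi hj he
        rcases Nat.lt_or_ge i (k+2) with h1 | h1
        · rcases Nat.lt_or_ge j (k+2) with h2 | h2
          · exact hinj i j (by omega) (by omega) he
          · have : j = k + 2 := by omega
            subst this
            exact absurd (he.symm) (hnew i (by omega))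
        · have : i = k + 2 := by omega
          subst this
          rcases Nat.lt_or_ge j (k+2) with h2 | h2
          · exact absurd he (hnew j (by omega))
          · omega
      · intro i hi
        rcases Nat.lt_or_ge i (k+1) with h1 | h1
        · exact hadj i h1
        · have : i = k + 1 := by omega
          subst this
          exact hnxt.1
  -- instantiate at k = n - 2
  obtain ⟨hinj, hadj⟩ := main (n - 2) (by omega)
  have hinj' : ∀ i j, i < n → j < n → f i = f j → i = j := by
    intro i j hi hj
    exact hinj i j (by omega) (by omega)
  have hadj' : ∀ i, i + 1 < n → G.Adj (f i) (f (i+1)) := by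
    intro i hi
    exact hadj i (by omega)
  -- surjectivity
  have hsurj : ∀ v, ∃ i < n, f i = v := by
    have himg : (Finset.range n).image f = Finset.univ := by
      apply Finset.eq_univ_of_card
      rw [Finset.card_image_of_injOn]
      · simp [hnn]
      · intro i hi j hj he
        exact hinj' i j (Finset.mem_range.mp hi) (Finset.mem_range.mp hj) he
    intro v
    have : v ∈ (Finset.range n).image f := by rw [himg]; exact Finset.mem_univ v
    obtain ⟨i, hi, he⟩ := Finset.mem_image.mp this
    exact ⟨i, Finset.mem_range.mp hi, he⟩
  -- neighbourhoods at the ends and interior for the full path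
  have hNint : ∀ i, 0 < i → i + 1 < n → G.neighborSet (f i) = {f (i-1), f (i+1)} := by
    intro i h0 hik
    obtain ⟨i', rfl⟩ : ∃ i', i = i' + 1 := ⟨i - 1, by omega⟩
    have h1 : G.Adj (f (i'+1)) (f i') := (hadj' i' (by omega)).symm
    have h2 : G.Adj (f (i'+1)) (f (i'+2)) := hadj' (i'+1) (by omega)
    have hne : f i' ≠ f (i'+2) := by
      intro he
      have := hinj' i' (i'+2) (by omega) (by omega) he
      omega
    have := nbhd_pair h1 h2 hne (hdeg (f (i'+1)))
    simpa using this
  refine ⟨f, hinj', hsurj, ?_⟩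
  intro i j hi hj
  constructor
  · intro hadjij
    by_contra hcon
    push_neg at hcon
    -- use neighbourhood structure at i
    rcases Nat.eq_zero_or_pos i with rfl | hpos
    · have : f j ∈ G.neighborSet (f 0) := hadjij
      rw [hN0] at this
      have := hinj' j 1 hj (by omega) (Set.mem_singleton_iff.mp this)
      omega
    rcases Nat.lt_or_ge (i+1) n with hint | hlast
    · have : f j ∈ G.neighborSet (f i) := hadjij
      rw [hNint i hpos hint] at this
      rcases this with h | h
      · have := hinj' j (i-1) hj (by omega) h
        omega
      · have := hinj' j (i+1) hj (by omega) (Set.mem_singleton_iff.mp h)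
        omega
    · -- i = n - 1 : argue via j
      rcases Nat.eq_zero_or_pos j with rfl | hjpos
      · have : f i ∈ G.neighborSet (f 0) := hadjij.symm
        rw [hN0] at this
        have := hinj' i 1 hi (by omega) (Set.mem_singleton_iff.mp this)
        omega
      rcases Nat.lt_or_ge (j+1) n with hjint | hjlast
      · have : f i ∈ G.neighborSet (f j) := hadjij.symm
        rw [hNint j hjpos hjint] at this
        rcases this with h | h
        · have := hinj' i (j-1) hi (by omega) h
          omega
        · have := hinj' i (j+1) hi (by omega) (Set.mem_singleton_iff.mp h)
          omega
      · -- both i and j are n-1 : impossible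
        have : i = j := by omega
        subst this
        exact G.irrefl hadjij
  · intro h
    rcases h with h | h
    · rw [← h]
      exact hadj' i (by omega)
    · rw [← h]
      exact (hadj' j (by omega)).symm

end PathExtract

end S14

/-- `G` is a path on `n ≥ 3` vertices: a connected finite graph with maximum
degree at most 2 having a vertex of degree 1. -/
theorem stmt14 {V : Type*} [Fintype V] [DecidableEq V] (G : SimpleGraph V)
    (hn : 3 ≤ Fintype.card V) (hG : G.Connected)
    (hdeg : ∀ v, (G.neighborSet v).ncard ≤ 2)
    (hleaf : ∃ v, (G.neighborSet v).ncard = 1)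
    (L : V → Finset ℕ)
    (hL : ∀ v, (G.neighborSet v).ncard + 1 ≤ (L v).card)
    (hU : 4 ≤ (Finset.univ.biUnion L).card)
    (α β : V → ℕ) (hα : properL G L α) (hβ : properL G L β)
    (hαu : ∃ v, unfrozenAt G L α v) (hβu : ∃ v, unfrozenAt G L β v) :
    Relation.ReflTransGen (recolStep G L) α β := by
  classical
  open S14 in
  set n := Fintype.card V with hndef
  obtain ⟨f, hinj, hsurj, hadjiff⟩ := S14.path_enum hG hdeg hleaf (by omega)
  have hidx : ∀ v : V, ∃ i, i < n ∧ f i = v := by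
    intro v
    obtain ⟨i, hi, he⟩ := hsurj v
    exact ⟨i, hi, he⟩
  choose idx hidx1 hidx2 using hidx
  have hfidx : ∀ i, i < n → idx (f i) = i := by
    intro i hi
    exact hinj _ _ (hidx1 _) hi (hidx2 (f i))
  set Lseq : ℕ → Finset ℕ := fun i => if i < n then L (f i) else ∅ with hLseq
  set γ : (V → ℕ) → ℕ → ℕ := fun cv i => if i < n then cv (f i) else 0 with hγ
  have hLseq_lt : ∀ i, i < n → Lseq i = L (f i) := fun i hi => if_pos hi
  have hγ_lt : ∀ cv i, i < n → γ cv i = cv (f i) := fun cv i hi => if_pos hi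
  -- adjacency of consecutive indices
  have hadjc : ∀ i, i + 1 < n → G.Adj (f i) (f (i+1)) := by
    intro i hi
    exact (hadjiff i (i+1) (by omega) (by omega)).mpr (Or.inl rfl)
  -- neighbour ncard lower bounds
  have hdeglb : ∀ i, i < n → 1 ≤ (G.neighborSet (f i)).ncard := by
    intro i hi
    have hne : (G.neighborSet (f i)).Nonempty := by
      rcases Nat.eq_zero_or_pos i with rfl | hpos
      · exact ⟨f 1, hadjc 0 (by omega)⟩
      · refine ⟨f (i-1), ?_⟩
        have h2 := hadjc (i-1) (by omega)
        have he : i - 1 + 1 = i := by omega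
        rw [he] at h2
        exact h2.symm
    have := (Set.ncard_pos (Set.toFinite _)).mpr hne
    omega
  have hdeg2 : ∀ i, 0 < i → i + 1 < n → 2 ≤ (G.neighborSet (f i)).ncard := by
    intro i h0 hi
    have h1 : G.Adj (f i) (f (i-1)) := by
      have := hadjc (i-1) (by omega)
      have he : i - 1 + 1 = i := by omega
      rw [he] at this
      exact this.symm
    have h2 : G.Adj (f i) (f (i+1)) := hadjc i hi
    have hne : f (i-1) ≠ f (i+1) := by
      intro he
      have := hinj (i-1) (i+1) (by omega) (by omega) he
      omega
    have hsub : ({f (i-1), f (i+1)} : Set V) ⊆ G.neighborSet (f i) := by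
      intro x hx
      rcases hx with rfl | hx
      · exact h1
      · rw [hx]; exact h2
    have := Set.ncard_le_ncard hsub (Set.toFinite _)
    rw [Set.ncard_pair hne] at this
    exact this
  have hsizes : S14.Sizes n Lseq := by
    refine ⟨?_, ?_, ?_⟩
    · rw [hLseq_lt 0 (by omega)]
      have := hL (f 0)
      have := hdeglb 0 (by omega)
      omega
    · rw [hLseq_lt (n-1) (by omega)]
      have := hL (f (n-1))
      have := hdeglb (n-1) (by omega)
      omega
    · intro i h0 hi
      rw [hLseq_lt i (by omega)]
      have := hL (f i)
      have := hdeg2 i h0 hi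
      omega
  have hunion : (Finset.range n).biUnion Lseq = Finset.univ.biUnion L := by
    ext x
    simp only [Finset.mem_biUnion, Finset.mem_range, Finset.mem_univ, true_and]
    constructor
    · rintro ⟨i, hi, hx⟩
      rw [hLseq_lt i hi] at hx
      exact ⟨f i, hx⟩
    · rintro ⟨v, hx⟩
      refine ⟨idx v, hidx1 v, ?_⟩
      rw [hLseq_lt _ (hidx1 v), hidx2 v]
      exact hx
  have hproper : ∀ cv, properL G L cv → S14.SProper n Lseq (γ cv) := by
    intro cv hc
    constructor
    · intro i hi
      rw [hγ_lt cv i hi, hLseq_lt i hi]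
      exact hc.1 (f i)
    · intro i hi
      rw [hγ_lt cv i (by omega), hγ_lt cv (i+1) hi]
      exact hc.2 (hadjc i hi)
  have hgood : ∀ cv, properL G L cv → (∃ v, unfrozenAt G L cv v) →
      S14.SGood n Lseq (γ cv) := by
    intro cv hc ⟨v, b, hbL, hbne, hbnb⟩
    refine ⟨hproper cv hc, idx v, hidx1 v, b, ?_, ?_, ?_, ?_⟩
    · rw [hLseq_lt _ (hidx1 v), hidx2 v]
      exact hbL
    · rw [hγ_lt cv _ (hidx1 v), hidx2 v]
      exact hbne
    · intro j hj
      rw [hγ_lt cv j (by have := hidx1 v; omega)]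
      apply hbnb
      have : G.Adj (f j) (f (idx v)) :=
        (hadjiff j (idx v) (by have := hidx1 v; omega) (hidx1 v)).mpr (Or.inl hj)
      rw [hidx2 v] at this
      exact this.symm
    · intro hlt
      rw [hγ_lt cv _ hlt]
      apply hbnb
      have : G.Adj (f (idx v)) (f (idx v + 1)) := hadjc (idx v) hlt
      rw [hidx2 v] at this
      exact this
  have hreach := S14.SMain n Lseq (γ α) (γ β) (by omega) hsizes
    (fun _ => by rw [hunion]; exact hU)
    (hgood α hα hαu) (hgood β hβ hβu)
    (by
      intro i hi
      show (if i < n then α (f i) else 0) = (if i < n then β (f i) else 0)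
      rw [if_neg (by omega), if_neg (by omega)])
  -- map back to V-colourings
  set toV : (ℕ → ℕ) → V → ℕ := fun d v => d (idx v) with htoV
  have htoVγ : ∀ cv, toV (γ cv) = cv := by
    intro cv
    funext v
    show (if idx v < n then cv (f (idx v)) else 0) = cv v
    rw [if_pos (hidx1 v), hidx2 v]
  have hVproper : ∀ d, S14.SProper n Lseq d → properL G L (toV d) := by
    intro d hd
    constructor
    · intro v
      have := hd.1 (idx v) (hidx1 v)
      rw [hLseq_lt _ (hidx1 v), hidx2 v] at this
      exact this
    · intro u w huw
      have hadj2 : G.Adj (f (idx u)) (f (idx w)) := by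
        rw [hidx2 u, hidx2 w]; exact huw
      rcases (hadjiff (idx u) (idx w) (hidx1 u) (hidx1 w)).mp hadj2 with h | h
      · have := hd.2 (idx u) (by rw [h]; exact hidx1 w)
        rw [h] at this
        exact this
      · have := hd.2 (idx w) (by rw [h]; exact hidx1 u)
        rw [h] at this
        exact fun hh => this hh.symm
  have hstepmap : ∀ d d', S14.SStep n Lseq d d' → recolStep G L (toV d) (toV d') := by
    intro d d' hstep
    obtain ⟨h1, h2, x, hx, hne, hag⟩ := hstep
    refine ⟨hVproper d h1, hVproper d' h2, f x, ?_, ?_⟩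
    · show d (idx (f x)) ≠ d' (idx (f x))
      rw [hfidx x hx]
      exact hne
    · intro u hu
      show d (idx u) = d' (idx u)
      apply hag
      intro he
      apply hu
      rw [← hidx2 u, he]
  have final : ∀ d, Relation.ReflTransGen (S14.SStep n Lseq) (γ α) d →
      Relation.ReflTransGen (recolStep G L) α (toV d) := by
    intro d hd
    induction hd with
    | refl => rw [htoVγ α]
    | tail _ hstep ih => exact ih.tail (hstepmap _ _ hstep)
  have := final (γ β) hreach
  rwa [htoVγ β] at this
end

section
/- In a frozen proper L-colouring c of a graph G with |L(v)| ≥ deg(v)+1 for all v, swapping the colours of the endpoints of any edge vw with N[v] ≠ N[w] yields a proper colouring (from the lists) that is unfrozen. -/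
lemma freeze_key {V : Type*} [Fintype V] [DecidableEq V] (G : SimpleGraph V)
    (L : V → Finset ℕ) (hL : ∀ x, (G.neighborSet x).ncard + 1 ≤ (L x).card)
    (c : V → ℕ) (hc : properL G L c) (hfrozen : ∀ x, ¬ unfrozenAt G L c x) (x : V) :
    (∀ u, G.Adj x u → c u ∈ L x) ∧
      ∀ ⦃u u'⦄, G.Adj x u → G.Adj x u' → c u = c u' → u = u' := by
  classical
  set s := (L x).erase (c x) with hs
  have hfin := Set.toFinite (G.neighborSet x)
  set t := hfin.toFinset with ht
  have hmem : ∀ u, u ∈ t ↔ G.Adj x u := fun u => by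
    simp [ht, Set.Finite.mem_toFinset]
  have A : ∀ b ∈ s, ∃ u ∈ t, c u = b := by
    intro b hb
    by_contra h
    push_neg at h
    exact hfrozen x ⟨b, Finset.mem_of_mem_erase hb, Finset.ne_of_mem_erase hb,
      fun u hu => h u ((hmem u).2 hu)⟩
  let g : ℕ → V := fun b => if h : ∃ u ∈ t, c u = b then h.choose else x
  have hg : ∀ b ∈ s, g b ∈ t ∧ c (g b) = b := by
    intro b hb
    have h := A b hb
    simp only [g, dif_pos h]
    exact ⟨h.choose_spec.1, h.choose_spec.2⟩
  have hcard : t.card ≤ s.card := by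
    have h1 : (G.neighborSet x).ncard = t.card := Set.ncard_eq_toFinset_card _ hfin
    have h2 : s.card = (L x).card - 1 := Finset.card_erase_of_mem (hc.1 x)
    have := hL x
    omega
  have hsurj := Finset.surj_on_of_inj_on_of_card_le (fun b _ => g b)
    (fun b hb => (hg b hb).1)
    (fun b b' hb hb' h => by rw [← (hg b hb).2, ← (hg b' hb').2]; exact congrArg c h) hcard
  have C : ∀ u, G.Adj x u → c u ∈ s ∧ u = g (c u) := by
    intro u hu
    obtain ⟨b, hb, hub⟩ := hsurj u ((hmem u).2 hu)
    have : c u = b := by rw [hub]; exact (hg b hb).2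
    subst this
    exact ⟨hb, hub⟩
  refine ⟨fun u hu => Finset.mem_of_mem_erase (C u hu).1, ?_⟩
  intro u u' hu hu' hcc
  rw [(C u hu).2, (C u' hu').2, hcc]

theorem stmt18 {V : Type*} [Fintype V] [DecidableEq V] (G : SimpleGraph V)
    (L : V → Finset ℕ)
    (hL : ∀ x, (G.neighborSet x).ncard + 1 ≤ (L x).card)
    (c : V → ℕ) (hc : properL G L c)
    (hfrozen : ∀ x, ¬ unfrozenAt G L c x)
    (v w : V) (hvw : G.Adj v w)
    (hN : insert v (G.neighborSet v) ≠ insert w (G.neighborSet w)) :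
    properL G L (Function.update (Function.update c v (c w)) w (c v)) ∧
      ∃ x, unfrozenAt G L (Function.update (Function.update c v (c w)) w (c v)) x := by
  classical
  have key := freeze_key G L hL c hc hfrozen
  set c' := Function.update (Function.update c v (c w)) w (c v) with hc'def
  have hvne : v ≠ w := hvw.ne
  have hc' : ∀ z, c' z = if z = w then c v else if z = v then c w else c z := by
    intro z
    simp only [hc'def, Function.update_apply]
  have hc'w : c' w = c v := by rw [hc' w]; simp
  have hc'v : c' v = c w := by rw [hc' v]; simp [hvne]
  have hc'o : ∀ z, z ≠ v → z ≠ w → c' z = c z := by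
    intro z h1 h2; rw [hc' z]; simp [h1, h2]
  have hne : c v ≠ c w := hc.2 hvw
  have hproper : properL G L c' := by
    constructor
    · intro z
      rcases eq_or_ne z w with rfl | hzw
      · rw [hc'w]; exact (key z).1 v hvw.symm
      rcases eq_or_ne z v with rfl | hzv
      · rw [hc'v]; exact (key z).1 w hvw
      · rw [hc'o z hzv hzw]; exact hc.1 z
    · intro a b hab
      rcases eq_or_ne v a with rfl | hav
      · rcases eq_or_ne w b with rfl | hbw
        · rw [hc'v, hc'w]; exact hne.symm
        · have hbv : b ≠ v := fun h => G.irrefl (h ▸ hab)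
          rw [hc'v, hc'o b hbv hbw.symm]
          exact fun h => hbw ((key v).2 hvw hab h)
      rcases eq_or_ne w a with rfl | haw
      · rcases eq_or_ne v b with rfl | hbv
        · rw [hc'w, hc'v]; exact hne
        · have hbw : b ≠ w := fun h => G.irrefl (h ▸ hab)
          rw [hc'w, hc'o b hbv.symm hbw]
          exact fun h => hbv ((key w).2 hvw.symm hab h)
      · rw [hc'o a hav.symm haw.symm]
        rcases eq_or_ne v b with rfl | hbv
        · rw [hc'v]
          exact fun h => haw ((key v).2 hab.symm hvw h).symm
        rcases eq_or_ne w b with rfl | hbw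
        · rw [hc'w]
          exact fun h => hav ((key w).2 hab.symm hvw.symm h).symm
        · rw [hc'o b hbv.symm hbw.symm]; exact hc.2 hab
  refine ⟨hproper, ?_⟩
  rw [Ne, Set.ext_iff] at hN
  push_neg at hN
  obtain ⟨u, hu⟩ := hN
  have helper : ∀ (p q : V), G.Adj p q → c' p = c q →
      (∀ z, z ≠ p → z ≠ q → c' z = c z) →
      ∀ y, y ∈ insert p (G.neighborSet p) → y ∉ insert q (G.neighborSet q) →
      ∃ x, unfrozenAt G L c' x := by
    intro p q hpq hcp hco y hy hny
    simp only [Set.mem_insert_iff, SimpleGraph.mem_neighborSet] at hy hny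
    push_neg at hny
    have hyq : y ≠ q := hny.1
    have hyp : y ≠ p := by
      rintro rfl
      exact hny.2 hpq.symm
    have hadj : G.Adj p y := by
      rcases hy with rfl | h
      · exact absurd rfl hyp
      · exact h
    refine ⟨y, c p, (key y).1 p hadj.symm, ?_, ?_⟩
    · rw [hco y hyp hyq]
      exact fun h => hc.2 hadj h
    · intro z hz
      rcases eq_or_ne z p with rfl | hzp
      · rw [hcp]
        exact fun h => hc.2 hpq h.symm
      rcases eq_or_ne z q with rfl | hzq
      · exact absurd hz.symm hny.2
      · rw [hco z hzp hzq]
        exact fun h => hzp ((key y).2 hz hadj.symm h)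
  rcases hu with ⟨h1, h2⟩ | ⟨h1, h2⟩
  · exact helper v w hvw hc'v (fun z hz1 hz2 => hc'o z hz1 hz2) u h1 h2
  · exact helper w v hvw.symm hc'w (fun z hz1 hz2 => hc'o z hz2 hz1) u h2 h1
end

section
/- There exists a connected graph G with a list-assignment L in which one vertex w has |L(w)| = deg(w) and all other vertices v have |L(v)| ≥ deg(v)+1, such that the reconfiguration graph of proper L-colourings has at least n! components each of which is not a singleton, where n+1 = |V(G)|. Concretely: take K_n with all lists {1,…,n}, add a pendant vertex x attached to one vertex of K_n with list {n+1, n+2}; then the reconfiguration graph consists of exactly n! components, each of size 2. -/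
/-!
The clique `K_n` receives all `n` colours of its common list under every proper colouring, so no
clique vertex can ever be recoloured: the new colour is already taken by one of its neighbours.
Hence a recolouring sequence never changes the colouring of `K_n`, and the `n!` bijections
`K_n → {1, …, n}`, each extended by colour `n + 1` on the pendant vertex (which may always switch
to `n + 2`), lie in pairwise distinct components.
-/

namespace SimpleGraph

variable {V : Type*} {G : SimpleGraph V}

lemma connected_of_forall_adj {r : V} (hr : ∀ v, v ≠ r → G.Adj r v) : G.Connected := by
  refine (connected_iff_exists_forall_reachable G).2 ⟨r, fun v => ?_⟩
  by_cases hv : v = r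
  · exact hv ▸ Reachable.refl (G := G) r
  · exact (hr v hv).reachable

end SimpleGraph

section Frozen

variable {V : Type*} {G : SimpleGraph V} {L : V → Finset ℕ} {s : Finset V} {A : Finset ℕ}

lemma properL.surjOn_of_isClique {c : V → ℕ} (hc : properL G L c) (hs : G.IsClique (s : Set V))
    (hL : ∀ v ∈ s, L v ⊆ A) (hA : A.card ≤ s.card) : Set.SurjOn c s A :=
  Finset.surjOn_of_injOn_of_card_le c (fun v hv => hL v hv (hc.1 v))
    (fun _ hu _ hv huv => by_contra fun hne => hc.2 (hs hu hv hne) huv) hA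

lemma recolStep.eqOn_of_isClique {c c' : V → ℕ} (h : recolStep G L c c')
    (hs : G.IsClique (s : Set V)) (hL : ∀ v ∈ s, L v ⊆ A) (hA : A.card ≤ s.card) :
    Set.EqOn c c' s := by
  obtain ⟨hc, hc', x, hx, hfix⟩ := h
  intro v hv
  by_cases hvx : v = x
  · subst hvx
    obtain ⟨u, hu, hcu⟩ := hc.surjOn_of_isClique hs hL hA (hL v hv (hc'.1 v))
    have huv : u ≠ v := by rintro rfl; exact hx hcu
    exact (hc'.2 (hs hv hu huv.symm) (hcu.symm.trans (hfix u huv))).elim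
  · exact hfix v hvx

lemma eqOn_of_reflTransGen_recolStep {c c' : V → ℕ}
    (h : Relation.ReflTransGen (recolStep G L) c c') (hs : G.IsClique (s : Set V))
    (hL : ∀ v ∈ s, L v ⊆ A) (hA : A.card ≤ s.card) : Set.EqOn c c' s := by
  induction h with
  | refl => exact Set.eqOn_refl c s
  | tail _ hstep ih => exact ih.trans (hstep.eqOn_of_isClique hs hL hA)

end Frozen

namespace PendantClique

variable {n : ℕ}

def adj (r : Fin n) : Option (Fin n) → Option (Fin n) → Prop
  | some a, some b => a ≠ b
  | none, some a | some a, none => a = r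
  | none, none => False

/-- `K_n` on the vertices `some a`, with the pendant vertex `none` attached to `some r`. -/
def graph (r : Fin n) : SimpleGraph (Option (Fin n)) where
  Adj := adj r
  symm := ⟨by rintro (_ | a) (_ | b) h <;> simp_all [adj, eq_comm]⟩
  loopless := ⟨by rintro (_ | a) h <;> simp [adj] at h⟩

def lists (n : ℕ) : Option (Fin n) → Finset ℕ
  | none => {n + 1, n + 2}
  | some _ => Finset.Icc 1 n

def permColouring (σ : Equiv.Perm (Fin n)) : Option (Fin n) → ℕ
  | none => n + 1
  | some a => σ a + 1

variable {r : Fin n}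

@[simp] lemma adj_some_some {a b : Fin n} : (graph r).Adj (some a) (some b) ↔ a ≠ b := Iff.rfl

@[simp] lemma adj_none_some {a : Fin n} : (graph r).Adj none (some a) ↔ a = r := Iff.rfl

@[simp] lemma adj_some_none {a : Fin n} : (graph r).Adj (some a) none ↔ a = r := Iff.rfl

@[simp] lemma not_adj_none_none : ¬ (graph r).Adj none none := id

lemma neighborSet_some_root : (graph r).neighborSet (some r) = {some r}ᶜ := by
  ext (_ | b) <;> simp [eq_comm]

lemma neighborSet_none : (graph r).neighborSet none = {some r} := by
  ext (_ | b) <;> simp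

lemma neighborSet_some_subset {a : Fin n} (ha : a ≠ r) :
    (graph r).neighborSet (some a) ⊆ {some a, none}ᶜ := by
  rintro (_ | b) h <;> simp_all [eq_comm]

lemma connected : (graph r).Connected :=
  SimpleGraph.connected_of_forall_adj fun v hv => by
    rwa [← SimpleGraph.mem_neighborSet, neighborSet_some_root]

lemma ncard_neighborSet_some_root : ((graph r).neighborSet (some r)).ncard = n := by
  rw [neighborSet_some_root, Set.ncard_compl, Set.ncard_singleton]
  simp

lemma ncard_neighborSet_add_one_le {v : Option (Fin n)} (hv : v ≠ some r) :
    ((graph r).neighborSet v).ncard + 1 ≤ (lists n v).card := by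
  cases v with
  | none => simp [neighborSet_none, lists]
  | some a =>
    have hle := Set.ncard_le_ncard (neighborSet_some_subset fun h => hv (congrArg some h))
    rw [Set.ncard_compl, Set.ncard_pair (Option.some_ne_none a)] at hle
    simp only [Nat.card_eq_fintype_card, Fintype.card_option, Fintype.card_fin] at hle
    simp only [lists, Nat.card_Icc]
    have := a.pos
    omega

lemma isClique_some :
    (graph r).IsClique ((Finset.univ.map .some : Finset (Option (Fin n))) : Set _) := by
  intro u hu v hv huv
  obtain ⟨a, -, rfl⟩ := Finset.mem_map.1 hu
  obtain ⟨b, -, rfl⟩ := Finset.mem_map.1 hv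
  exact fun h => huv (congrArg some h)

lemma properL_permColouring (σ : Equiv.Perm (Fin n)) :
    properL (graph r) (lists n) (permColouring σ) := by
  refine ⟨?_, ?_⟩
  · rintro (_ | a)
    · simp [lists, permColouring]
    · simp [lists, permColouring, Nat.succ_le_of_lt (σ a).isLt]
  · rintro (_ | a) (_ | b) hab
    · exact absurd hab not_adj_none_none
    · simp [permColouring]; omega
    · simp [permColouring]; omega
    · simpa [permColouring, Fin.val_inj] using hab

lemma unfrozenAt_none (σ : Equiv.Perm (Fin n)) :
    unfrozenAt (graph r) (lists n) (permColouring σ) none := by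
  refine ⟨n + 2, by simp [lists], by simp [permColouring], ?_⟩
  rintro (_ | a) h
  · exact absurd h not_adj_none_none
  · simp [permColouring]; omega

lemma not_reachable_permColouring {σ τ : Equiv.Perm (Fin n)} (hστ : σ ≠ τ) :
    ¬ Relation.ReflTransGen (recolStep (graph r) (lists n)) (permColouring σ) (permColouring τ) := by
  intro h
  have hfrozen := eqOn_of_reflTransGen_recolStep h isClique_some (A := Finset.Icc 1 n)
    (by simp [lists]) (by simp)
  exact hστ <| Equiv.ext fun a => Fin.ext <| by
    simpa [permColouring] using hfrozen (Finset.mem_map_of_mem _ (Finset.mem_univ a))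

end PendantClique

open PendantClique in
/-- Shattering example: a connected graph on `n+1` vertices where one vertex `w`
has a list of size exactly `deg w` and all others a list of size at least
`deg v + 1`, whose recolouring graph has at least `n!` pairwise unreachable
unfrozen (hence non-singleton-component) proper list colourings. -/
theorem stmt19 (n : ℕ) (hn : 1 ≤ n) :
    ∃ (V : Type) (_ : Fintype V) (G : SimpleGraph V) (L : V → Finset ℕ) (w : V),
      G.Connected ∧ Fintype.card V = n + 1 ∧
      (L w).card = (G.neighborSet w).ncard ∧
      (∀ v, v ≠ w → (G.neighborSet v).ncard + 1 ≤ (L v).card) ∧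
      ∃ F : Fin (Nat.factorial n) → (V → ℕ),
        (∀ i, properL G L (F i)) ∧
        (∀ i, ∃ x, unfrozenAt G L (F i) x) ∧
        (∀ i j, i ≠ j → ¬ Relation.ReflTransGen (recolStep G L) (F i) (F j)) := by
  let r : Fin n := ⟨0, hn⟩
  let perm : Fin (Nat.factorial n) ≃ Equiv.Perm (Fin n) :=
    (Fintype.equivFinOfCardEq (by simp [Fintype.card_perm])).symm
  refine ⟨Option (Fin n), inferInstance, graph r, lists n, some r, connected, by simp,
    ?_, fun v hv => ncard_neighborSet_add_one_le hv, fun i => permColouring (perm i),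
    fun i => properL_permColouring _, fun i => ⟨none, unfrozenAt_none _⟩,
    fun i j hij => not_reachable_permColouring (perm.injective.ne hij)⟩
  rw [ncard_neighborSet_some_root]
  simp [lists]
end
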